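/- arXiv:0912.5408 — 11 statements merged into one kernel-verified Lean document; each statement's English description precedes it below -/
import Mathlib

section
/- Let C be a bounded convex subset of M with nonempty interior and 0 ∈ int C, and let W : ℝ^d × M → [0,+∞] be Borel measurable with W(x,ξ) = +∞ whenever ξ ∉ cl(C). Assume (H2): for every compact set K ⊆ int C, the function x ↦ sup_{ξ∈K} W(x,ξ) is essentially bounded on every compact subset of ℝ^d. Then for every t ∈ [0,1), sup_{ξ ∈ t·cl(C)} HW(ξ) < +∞. -/
open MeasureTheory
open scoped Pointwise ENNReal

/-- The open cube `(0,n)^d` in `ℝ^d`. -/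
def cube (d n : ℕ) : Set (Fin d → ℝ) := {x | ∀ i, x i ∈ Set.Ioo (0 : ℝ) (n : ℝ)}

/-- The homogenized density `HF(ξ) = inf_{n ≥ 1} (1/n^d) inf { ∫_{(0,n)^d} F(x, ξ + Dφ(x)) dx :
φ Lipschitz, φ = 0 outside (0,n)^d }`. -/
noncomputable def HF {d m : ℕ}
    (F : (Fin d → ℝ) → ((Fin d → ℝ) →L[ℝ] (Fin m → ℝ)) → ℝ≥0∞)
    (ξ : (Fin d → ℝ) →L[ℝ] (Fin m → ℝ)) : ℝ≥0∞ :=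
  ⨅ (n : ℕ) (_ : 1 ≤ n),
    (1 / (n : ℝ≥0∞) ^ d) *
      ⨅ (φ : (Fin d → ℝ) → (Fin m → ℝ)) (_ : ∃ K, LipschitzWith K φ)
        (_ : ∀ x ∉ cube d n, φ x = 0),
        ∫⁻ x in cube d n, F x (ξ + fderiv ℝ φ x) ∂volume

/-- Under (H2), `HW` is bounded on `t • cl C` for every `t ∈ [0,1)`. -/
theorem stmt_3 {d m : ℕ} (hd : 0 < d)
    {C : Set ((Fin d → ℝ) →L[ℝ] (Fin m → ℝ))}
    (hconv : Convex ℝ C) (hbdd : Bornology.IsBounded C)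
    (hint : (interior C).Nonempty) (h0 : 0 ∈ interior C)
    (W : (Fin d → ℝ) → ((Fin d → ℝ) →L[ℝ] (Fin m → ℝ)) → ℝ≥0∞)
    (hWmeas : Measurable (Function.uncurry W))
    (hdom : ∀ x ξ, ξ ∉ closure C → W x ξ = ⊤)
    (hH2 : ∀ K : Set ((Fin d → ℝ) →L[ℝ] (Fin m → ℝ)), IsCompact K → K ⊆ interior C →
      ∀ Q : Set (Fin d → ℝ), IsCompact Q →
        essSup (fun x => ⨆ ξ ∈ K, W x ξ) (volume.restrict Q) < ⊤) :
    ∀ t ∈ Set.Ico (0 : ℝ) 1, (⨆ ξ ∈ t • closure C, HF W ξ) < ⊤ := by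
  intro t ht
  have hKcpt : IsCompact (t • closure C) :=
    (hbdd.isCompact_closure).smul t
  have hKsub : t • closure C ⊆ interior C := by
    rintro ξ ⟨y, hy, rfl⟩
    have := hconv.combo_interior_closure_mem_interior h0 hy
      (by linarith [ht.2] : (0:ℝ) < 1 - t) ht.1 (by ring)
    simpa using this
  set Q : Set (Fin d → ℝ) := Set.Icc 0 1 with hQ
  have hQcpt : IsCompact Q := isCompact_Icc
  have hM := hH2 (t • closure C) hKcpt hKsub Q hQcpt
  set M := essSup (fun x => ⨆ ξ ∈ t • closure C, W x ξ) (volume.restrict Q) with hMdef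
  have hcube_sub : cube d 1 ⊆ Q := by
    intro x hx
    refine ⟨fun i => (hx i).1.le, fun i => ?_⟩
    simpa using (hx i).2.le
  have key : ∀ ξ ∈ t • closure C, HF W ξ ≤ M * volume Q := by
    intro ξ hξ
    have h1 : HF W ξ ≤ (1 / ((1:ℕ) : ℝ≥0∞) ^ d) *
        ∫⁻ x in cube d 1, W x (ξ + fderiv ℝ (fun _ => (0 : Fin m → ℝ)) x) ∂volume := by
      refine le_trans (iInf_le _ 1) (le_trans (iInf_le _ le_rfl) ?_)
      refine mul_le_mul_right ?_ _
      refine le_trans (iInf_le _ (fun _ => 0)) ?_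
      refine le_trans (iInf_le _ ⟨0, LipschitzWith.const' 0⟩) ?_
      exact iInf_le _ (fun _ _ => rfl)
    have h2 : (∫⁻ x in cube d 1, W x (ξ + fderiv ℝ (fun _ => (0 : Fin m → ℝ)) x) ∂volume)
        = ∫⁻ x in cube d 1, W x ξ ∂volume := by
      simp [fderiv_const]
    have h3 : (∫⁻ x in cube d 1, W x ξ ∂volume)
        ≤ ∫⁻ x in Q, (⨆ ξ' ∈ t • closure C, W x ξ') ∂volume := by
      refine lintegral_mono' (Measure.restrict_mono hcube_sub le_rfl) ?_
      intro x
      exact le_biSup _ hξ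
    have h4 : (∫⁻ x in Q, (⨆ ξ' ∈ t • closure C, W x ξ') ∂volume) ≤ M * volume Q := by
      calc ∫⁻ x in Q, (⨆ ξ' ∈ t • closure C, W x ξ') ∂volume
          ≤ ∫⁻ _ in Q, M ∂volume := lintegral_mono_ae (ae_le_essSup (Filter.isBoundedUnder_of ⟨⊤, fun _ => le_top⟩))
        _ = M * volume Q := by simp [Measure.restrict_apply_univ]
    calc HF W ξ ≤ _ := h1
      _ ≤ M * volume Q := by
          rw [h2]
          simpa using h3.trans h4
  have hfin : M * volume Q < ⊤ :=
    ENNReal.mul_lt_top hM hQcpt.measure_lt_top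
  exact lt_of_le_of_lt (iSup₂_le key) hfin
end

section
/- Let C be a bounded convex subset of M with nonempty interior and 0 ∈ int C, and let W : ℝ^d × M → [0,+∞] be Borel measurable with W(x,ξ) = +∞ whenever ξ ∉ cl(C). Assume (H2): for every compact set K ⊆ int C, the function x ↦ sup_{ξ∈K} W(x,ξ) is essentially bounded on every compact subset of ℝ^d. Then HW(ξ) < +∞ for every ξ ∈ int C, and HW(ξ) = +∞ for every ξ ∉ cl(C); in other words, int C ⊆ {ξ : HW(ξ) < +∞} ⊆ cl(C). -/
open MeasureTheory
open scoped Pointwise ENNReal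

/-!
If `ξ ∈ int C`, testing `HW ξ` with `n = 1` and `φ = 0` bounds it by `∫_{(0,1)^d} W(x, ξ) dx`,
which is finite by (H2) applied to `K = {ξ}`.

If `ξ ∉ cl C`, let `φ` be Lipschitz and vanish outside `(0,n)^d`. Then `∫ Dφ = 0`: by Rademacher
`Dφ` agrees a.e. with the line derivatives, whose integrals vanish by integration by parts against
the constant `1`. Hence `ξ` is the average of `ξ + Dφ` over the cube, and by Jensen's inequality for
the closed convex set `cl C` the map `ξ + Dφ` leaves `cl C` on a set of positive measure, where
`W = +∞`.
-/

open Measure Set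
open scoped NNReal

theorem setLIntegral_eq_top_of_setAverage_notMem {α E : Type*} [MeasurableSpace α]
    {μ : Measure α} [NormedAddCommGroup E] [NormedSpace ℝ E] [CompleteSpace E]
    [MeasurableSpace E] [BorelSpace E] {S : Set E} (hS : Convex ℝ S) (hSc : IsClosed S)
    {W : α → E → ℝ≥0∞} (hW : ∀ x, ∀ ξ ∉ S, W x ξ = ∞) {s : Set α} (hs0 : μ s ≠ 0)
    (hs : μ s ≠ ∞) {g : α → E} (hg : IntegrableOn g s μ) (havg : ⨍ x in s, g x ∂μ ∉ S) :
    ∫⁻ x in s, W x (g x) ∂μ = ∞ := by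
  set B := {x | g x ∉ S}
  have hB : μ.restrict s B ≠ 0 := fun h =>
    havg (hS.set_average_mem hSc hs0 hs (ae_iff.2 h) hg)
  have hBm : NullMeasurableSet B (μ.restrict s) :=
    hg.aemeasurable.nullMeasurable hSc.measurableSet.compl
  refine top_le_iff.1 ?_
  calc ∞ = ∫⁻ x in s, B.indicator (fun _ => ∞) x ∂μ := by
        rw [lintegral_indicator_const₀ hBm, ENNReal.top_mul hB]
    _ ≤ ∫⁻ x in s, W x (g x) ∂μ :=
        lintegral_mono fun x => indicator_le (fun x hx => (hW x (g x) hx).ge) x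

theorem lintegral_lt_top_of_essSup_lt_top {α : Type*} [MeasurableSpace α] {μ : Measure α}
    [IsFiniteMeasure μ] {f : α → ℝ≥0∞} (hf : essSup f μ < ∞) : ∫⁻ x, f x ∂μ < ∞ :=
  calc ∫⁻ x, f x ∂μ ≤ ∫⁻ _, essSup f μ ∂μ := lintegral_mono_ae (ENNReal.ae_le_essSup f)
    _ = essSup f μ * μ univ := lintegral_const _
    _ < ∞ := ENNReal.mul_lt_top hf (measure_lt_top μ univ)

theorem cube_eq_pi (d n : ℕ) : cube d n = univ.pi fun _ => Ioo (0 : ℝ) n := by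
  ext x
  simp [cube]

theorem cube_ae_eq_Icc (d n : ℕ) :
    cube d n =ᵐ[volume] Icc (0 : Fin d → ℝ) (fun _ => (n : ℝ)) := by
  rw [cube_eq_pi]
  exact univ_pi_Ioo_ae_eq_Icc

theorem cube_subset_Icc (d n : ℕ) : cube d n ⊆ Icc (0 : Fin d → ℝ) (fun _ => (n : ℝ)) :=
  fun _ hx => ⟨fun i => (hx i).1.le, fun i => (hx i).2.le⟩

theorem volume_cube (d n : ℕ) : volume (cube d n) = (n : ℝ≥0∞) ^ d := by
  simp [cube_eq_pi, volume_pi_pi, Real.volume_Ioo]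

theorem HasCompactSupport.of_eq_zero_off_cube {d n : ℕ} {F : Type*} [Zero F]
    {φ : (Fin d → ℝ) → F} (hφ : ∀ x ∉ cube d n, φ x = 0) : HasCompactSupport φ :=
  HasCompactSupport.intro isCompact_Icc fun x hx => hφ x fun h => hx (cube_subset_Icc d n h)

section LipschitzCompactSupport

variable {E F : Type*} [NormedAddCommGroup E] [NormedSpace ℝ E] [FiniteDimensional ℝ E]
  [MeasurableSpace E] [BorelSpace E] {μ : Measure E} [IsAddHaarMeasure μ]
  [NormedAddCommGroup F] [NormedSpace ℝ F] {K : ℝ≥0}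

theorem LipschitzWith.integral_lineDeriv_eq_zero {f : E → ℝ} (hf : LipschitzWith K f)
    (hc : HasCompactSupport f) (v : E) : ∫ x, lineDeriv ℝ f x v ∂μ = 0 := by
  have h := integral_lineDeriv_mul_eq (μ := μ) (LipschitzWith.const (1 : ℝ)) hf hc (-v)
  simpa [lineDeriv] using h.symm

variable [FiniteDimensional ℝ F]

theorem LipschitzWith.integrable_fderiv {f : E → F} (hf : LipschitzWith K f)
    (hc : HasCompactSupport f) : Integrable (fderiv ℝ f) μ := by
  refine IntegrableOn.integrable_of_forall_notMem_eq_zero (f := fderiv ℝ f) (s := tsupport f) ?_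
    fun x hx => fderiv_of_notMem_tsupport ℝ hx
  exact Measure.integrableOn_of_bounded hc.isCompact.measure_lt_top.ne
    (measurable_fderiv ℝ f).aestronglyMeasurable
    (ae_of_all _ fun _ => norm_fderiv_le_of_lipschitz ℝ hf)

theorem LipschitzWith.integral_fderiv_eq_zero {f : E → F} (hf : LipschitzWith K f)
    (hc : HasCompactSupport f) : ∫ x, fderiv ℝ f x ∂μ = 0 := by
  ext1 v
  rw [ContinuousLinearMap.integral_apply (hf.integrable_fderiv hc) v]
  refine SeparatingDual.eq_zero_of_forall_dual_eq_zero (R := ℝ) fun ℓ => ?_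
  have hv : Integrable (fun x => fderiv ℝ f x v) μ :=
    (ContinuousLinearMap.apply ℝ F v).integrable_comp (hf.integrable_fderiv hc)
  rw [← ℓ.integral_comp_comm hv]
  have hℓf : LipschitzWith (‖ℓ‖₊ * K) (ℓ ∘ f) := ℓ.lipschitz.comp hf
  calc ∫ x, ℓ (fderiv ℝ f x v) ∂μ = ∫ x, lineDeriv ℝ (ℓ ∘ f) x v ∂μ := by
        refine integral_congr_ae ?_
        filter_upwards [hf.ae_differentiableAt (μ := μ)] with x hx
        rw [(ℓ.differentiableAt.comp x hx).lineDeriv_eq_fderiv,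
          fderiv_comp x ℓ.differentiableAt hx, ℓ.fderiv]
        rfl
    _ = 0 := hℓf.integral_lineDeriv_eq_zero (hc.comp_left ℓ.map_zero) v

end LipschitzCompactSupport

section Cube

variable {d m n : ℕ} {F : Type*} [NormedAddCommGroup F] [NormedSpace ℝ F] [FiniteDimensional ℝ F]

theorem LipschitzWith.setIntegral_cube_fderiv_eq_zero {K : ℝ≥0} {φ : (Fin d → ℝ) → F}
    (hφ : LipschitzWith K φ) (h0 : ∀ x ∉ cube d n, φ x = 0) :
    ∫ x in cube d n, fderiv ℝ φ x = 0 := by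
  have hc := HasCompactSupport.of_eq_zero_off_cube h0
  rw [setIntegral_congr_set (cube_ae_eq_Icc d n), setIntegral_eq_integral_of_forall_compl_eq_zero,
    hφ.integral_fderiv_eq_zero hc]
  intro x hx
  refine fderiv_of_notMem_tsupport ℝ fun h => hx ?_
  exact closure_minimal (fun y hy => cube_subset_Icc d n (not_imp_comm.1 (h0 y) hy))
    isClosed_Icc h

theorem setLIntegral_cube_eq_top {C : Set ((Fin d → ℝ) →L[ℝ] (Fin m → ℝ))} (hC : Convex ℝ C)
    {W : (Fin d → ℝ) → ((Fin d → ℝ) →L[ℝ] (Fin m → ℝ)) → ℝ≥0∞}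
    (hW : ∀ x ξ, ξ ∉ closure C → W x ξ = ∞) {ξ : (Fin d → ℝ) →L[ℝ] (Fin m → ℝ)}
    (hξ : ξ ∉ closure C) (hn : 1 ≤ n) {K : ℝ≥0} {φ : (Fin d → ℝ) → (Fin m → ℝ)}
    (hφ : LipschitzWith K φ) (h0 : ∀ x ∉ cube d n, φ x = 0) :
    ∫⁻ x in cube d n, W x (ξ + fderiv ℝ φ x) = ∞ := by
  have hvol0 : volume (cube d n) ≠ 0 := by
    rw [volume_cube]; exact pow_ne_zero d (Nat.cast_ne_zero.2 (by omega))
  have hvol : volume (cube d n) ≠ ∞ := by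
    rw [volume_cube]; exact ENNReal.pow_ne_top (ENNReal.natCast_ne_top n)
  have hDφ : IntegrableOn (fderiv ℝ φ) (cube d n) :=
    (hφ.integrable_fderiv (HasCompactSupport.of_eq_zero_off_cube h0)).integrableOn
  have hconst : IntegrableOn (fun _ => ξ) (cube d n) :=
    integrableOn_const (C := ξ) hvol enorm_ne_top
  refine setLIntegral_eq_top_of_setAverage_notMem hC.closure isClosed_closure
    hW hvol0 hvol (hconst.add hDφ) ?_
  rwa [setAverage_eq, integral_add hconst hDφ, hφ.setIntegral_cube_fderiv_eq_zero h0, add_zero,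
    ← setAverage_eq, setAverage_const hvol0 hvol]

end Cube

theorem HF_le_setLIntegral_cube_one {d m : ℕ}
    (F : (Fin d → ℝ) → ((Fin d → ℝ) →L[ℝ] (Fin m → ℝ)) → ℝ≥0∞)
    (ξ : (Fin d → ℝ) →L[ℝ] (Fin m → ℝ)) : HF F ξ ≤ ∫⁻ x in cube d 1, F x ξ := by
  have hzero : ∀ x ∉ cube d 1, (0 : (Fin d → ℝ) → (Fin m → ℝ)) x = 0 := fun _ _ => rfl
  calc HF F ξ ≤ 1 / ((1 : ℕ) : ℝ≥0∞) ^ d *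
        ∫⁻ x in cube d 1, F x (ξ + fderiv ℝ (0 : (Fin d → ℝ) → (Fin m → ℝ)) x) :=
      (iInf₂_le 1 le_rfl).trans
        (mul_le_mul_right (iInf_le_of_le 0 (iInf₂_le ⟨0, LipschitzWith.const 0⟩ hzero)) _)
    _ = ∫⁻ x in cube d 1, F x ξ := by simp

theorem HF_eq_top_of_setLIntegral_eq_top {d m : ℕ}
    {F : (Fin d → ℝ) → ((Fin d → ℝ) →L[ℝ] (Fin m → ℝ)) → ℝ≥0∞}
    {ξ : (Fin d → ℝ) →L[ℝ] (Fin m → ℝ)}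
    (h : ∀ n, 1 ≤ n → ∀ (K : ℝ≥0) (φ : (Fin d → ℝ) → (Fin m → ℝ)), LipschitzWith K φ →
      (∀ x ∉ cube d n, φ x = 0) → ∫⁻ x in cube d n, F x (ξ + fderiv ℝ φ x) = ∞) :
    HF F ξ = ∞ := by
  refine iInf₂_eq_top.2 fun n hn => ?_
  have hinner : (⨅ (φ : (Fin d → ℝ) → (Fin m → ℝ)) (_ : ∃ K, LipschitzWith K φ)
      (_ : ∀ x ∉ cube d n, φ x = 0), ∫⁻ x in cube d n, F x (ξ + fderiv ℝ φ x)) = ∞ := by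
    simp only [iInf_eq_top]
    rintro φ ⟨K, hφ⟩ h0
    exact h n hn K φ hφ h0
  rw [hinner, ENNReal.mul_top (by simp)]

theorem stmt_5_general {d m : ℕ}
    {C : Set ((Fin d → ℝ) →L[ℝ] (Fin m → ℝ))}
    (hconv : Convex ℝ C)
    (W : (Fin d → ℝ) → ((Fin d → ℝ) →L[ℝ] (Fin m → ℝ)) → ℝ≥0∞)
    (hdom : ∀ x ξ, ξ ∉ closure C → W x ξ = ⊤)
    (hH2 : ∀ K : Set ((Fin d → ℝ) →L[ℝ] (Fin m → ℝ)), IsCompact K → K ⊆ interior C →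
      ∀ Q : Set (Fin d → ℝ), IsCompact Q →
        essSup (fun x => ⨆ ξ ∈ K, W x ξ) (volume.restrict Q) < ⊤) :
    (∀ ξ ∈ interior C, HF W ξ < ⊤) ∧ (∀ ξ, ξ ∉ closure C → HF W ξ = ⊤) := by
  refine ⟨fun ξ hξ => ?_, fun ξ hξ => ?_⟩
  · set Q : Set (Fin d → ℝ) := Icc 0 fun _ => ((1 : ℕ) : ℝ)
    have hess := hH2 {ξ} isCompact_singleton (singleton_subset_iff.2 hξ) Q isCompact_Icc
    simp only [iSup_singleton] at hess
    have : IsFiniteMeasure (volume.restrict Q) :=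
      isFiniteMeasure_restrict.2 isCompact_Icc.measure_lt_top.ne
    calc HF W ξ ≤ ∫⁻ x in cube d 1, W x ξ := HF_le_setLIntegral_cube_one W ξ
      _ ≤ ∫⁻ x in Q, W x ξ := lintegral_mono_set (cube_subset_Icc d 1)
      _ < ⊤ := lintegral_lt_top_of_essSup_lt_top hess
  · exact HF_eq_top_of_setLIntegral_eq_top fun n hn K φ hφ h0 =>
      setLIntegral_cube_eq_top hconv hdom hξ hn hφ h0

/-- Under (H2), `int C ⊆ dom HW ⊆ cl C`. -/
theorem stmt_5 {d m : ℕ} (hd : 0 < d)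
    {C : Set ((Fin d → ℝ) →L[ℝ] (Fin m → ℝ))}
    (hconv : Convex ℝ C) (hbdd : Bornology.IsBounded C)
    (hint : (interior C).Nonempty) (h0 : 0 ∈ interior C)
    (W : (Fin d → ℝ) → ((Fin d → ℝ) →L[ℝ] (Fin m → ℝ)) → ℝ≥0∞)
    (hWmeas : Measurable (Function.uncurry W))
    (hdom : ∀ x ξ, ξ ∉ closure C → W x ξ = ⊤)
    (hH2 : ∀ K : Set ((Fin d → ℝ) →L[ℝ] (Fin m → ℝ)), IsCompact K → K ⊆ interior C →
      ∀ Q : Set (Fin d → ℝ), IsCompact Q →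
        essSup (fun x => ⨆ ξ ∈ K, W x ξ) (volume.restrict Q) < ⊤) :
    (∀ ξ ∈ interior C, HF W ξ < ⊤) ∧ (∀ ξ, ξ ∉ closure C → HF W ξ = ⊤) :=
  stmt_5_general hconv W hdom hH2
end

section
/- Let D ⊆ M and let f : M → [0,+∞] be r.u.u.s.c. in D. Assume (i) t·cl(D) ⊆ D for all t ∈ [0,1), and (ii) f is lower semicontinuous in D, i.e., for every ξ ∈ D and every sequence (ξ_n) ⊂ D with ξ_n → ξ one has f(ξ) ≤ liminf_n f(ξ_n). Then for every ξ ∈ cl(D) \ D the limit lim_{t→1⁻} f(tξ) exists in [0,+∞], and the function f̂ : M → [0,+∞] defined by f̂(ξ) = f(ξ) if ξ ∈ D, f̂(ξ) = lim_{t→1⁻} f(tξ) if ξ ∈ cl(D) \ D, and f̂(ξ) = +∞ if ξ ∉ cl(D), is r.u.u.s.c. in cl(D) and agrees with f on D. -/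
open Filter
open scoped Pointwise ENNReal Topology

/-!
Write `t • ξ = (t / s) • (s • ξ)` with `s • ξ ∈ D` for `t < s < 1`. Uniform radial upper
semicontinuity in `D` then gives `f (t • ξ) ≤ f (s • ξ) + ε` for every `ξ ∈ closure D` as soon as
`1 - t < η`, uniformly in `s`. Letting `s → 1⁻` bounds `f (t • ξ)` by the radial `liminf` plus `ε`,
and letting `t → 1⁻` shows that the radial `limsup` is at most the `liminf`, so the radial limit
exists. The first bound, with the `liminf` replaced by the larger `limsup`, is the radial upper
semicontinuity of the extension at points of `closure D \ D`.
-/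

/-- `f` is radially uniformly upper semicontinuous (r.u.u.s.c.) in `A`. -/
def RUUSC {E : Type*} [NormedAddCommGroup E] [NormedSpace ℝ E]
    (f : E → ℝ≥0∞) (A : Set E) : Prop :=
  ∀ ε : ℝ, 0 < ε → ∃ η : ℝ, 0 < η ∧
    ∀ ξ ∈ A, ∀ t ∈ Set.Ico (0 : ℝ) 1, 1 - t < η → f (t • ξ) ≤ f ξ + ENNReal.ofReal ε

-- The extension `f̂` of `f`, defined via the radial limit on `cl D \ D`.
open Classical in
noncomputable def extRadial {E : Type*} [NormedAddCommGroup E] [NormedSpace ℝ E]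
    (f : E → ℝ≥0∞) (D : Set E) (ξ : E) : ℝ≥0∞ :=
  if ξ ∈ D then f ξ
  else if ξ ∈ closure D then limsup (fun t : ℝ => f (t • ξ)) (𝓝[<] (1 : ℝ))
  else ⊤

namespace RUUSC

variable {E : Type*} [NormedAddCommGroup E] [NormedSpace ℝ E] {f : E → ℝ≥0∞} {D : Set E}

theorem exists_apply_smul_le_apply_smul_add (hf : RUUSC f D)
    (hD : ∀ t ∈ Set.Ico (0 : ℝ) 1, t • closure D ⊆ D) {ε : ℝ} (hε : 0 < ε) :
    ∃ η : ℝ, 0 < η ∧ ∀ ξ ∈ closure D, ∀ t s : ℝ, 0 ≤ t → t < s → s < 1 → 1 - t < η →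
      f (t • ξ) ≤ f (s • ξ) + ENNReal.ofReal ε := by
  obtain ⟨η, hη0, hη⟩ := hf ε hε
  refine ⟨η, hη0, fun ξ hξ t s ht0 hts hs1 htη => ?_⟩
  have hs0 : 0 < s := ht0.trans_lt hts
  have hsD : s • ξ ∈ D := hD s ⟨hs0.le, hs1⟩ (Set.smul_mem_smul_set hξ)
  have h_smul : (t / s) • (s • ξ) = t • ξ := by rw [smul_smul, div_mul_cancel₀ _ hs0.ne']
  have h_le : t ≤ t / s := le_div_self ht0 hs0 hs1.le
  rw [← h_smul]
  exact hη _ hsD _ ⟨div_nonneg ht0 hs0.le, (div_lt_one hs0).2 hts⟩ (by linarith)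

theorem exists_apply_smul_le_liminf_add (hf : RUUSC f D)
    (hD : ∀ t ∈ Set.Ico (0 : ℝ) 1, t • closure D ⊆ D) {ε : ℝ} (hε : 0 < ε) :
    ∃ η : ℝ, 0 < η ∧ ∀ ξ ∈ closure D, ∀ t ∈ Set.Ico (0 : ℝ) 1, 1 - t < η →
      f (t • ξ) ≤ liminf (fun s : ℝ => f (s • ξ)) (𝓝[<] 1) + ENNReal.ofReal ε := by
  obtain ⟨η, hη0, hη⟩ := exists_apply_smul_le_apply_smul_add hf hD hε
  refine ⟨η, hη0, fun ξ hξ t ⟨ht0, ht1⟩ htη => ?_⟩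
  have h_ev : ∀ᶠ s in 𝓝[<] (1 : ℝ), f (t • ξ) ≤ f (s • ξ) + ENNReal.ofReal ε := by
    filter_upwards [Ioo_mem_nhdsLT ht1] with s hs
    exact hη ξ hξ t s ht0 hs.1 hs.2 htη
  calc f (t • ξ) ≤ liminf (fun s : ℝ => f (s • ξ) + ENNReal.ofReal ε) (𝓝[<] 1) :=
        le_liminf_of_le (by isBoundedDefault) h_ev
    _ = _ := liminf_add_const _ _ _ (by isBoundedDefault) (by isBoundedDefault)

theorem limsup_le_liminf_apply_smul (hf : RUUSC f D)
    (hD : ∀ t ∈ Set.Ico (0 : ℝ) 1, t • closure D ⊆ D) {ξ : E} (hξ : ξ ∈ closure D) :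
    limsup (fun t : ℝ => f (t • ξ)) (𝓝[<] 1) ≤ liminf (fun t : ℝ => f (t • ξ)) (𝓝[<] 1) := by
  refine ENNReal.le_of_forall_pos_le_add fun ε hε _ => ?_
  obtain ⟨η, hη0, hη⟩ := exists_apply_smul_le_liminf_add hf hD (NNReal.coe_pos.2 hε)
  have h_lt : max 0 (1 - η) < 1 := max_lt one_pos (by linarith)
  refine limsup_le_of_le (by isBoundedDefault) ?_
  filter_upwards [Ioo_mem_nhdsLT h_lt] with t ⟨ht, ht1⟩
  rw [max_lt_iff] at ht
  simpa only [ENNReal.ofReal_coe_nnreal] using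
    hη ξ hξ t ⟨ht.1.le, ht1⟩ (by linarith)

theorem tendsto_apply_smul_limsup (hf : RUUSC f D)
    (hD : ∀ t ∈ Set.Ico (0 : ℝ) 1, t • closure D ⊆ D) {ξ : E} (hξ : ξ ∈ closure D) :
    Tendsto (fun t : ℝ => f (t • ξ)) (𝓝[<] 1)
      (𝓝 (limsup (fun t : ℝ => f (t • ξ)) (𝓝[<] 1))) :=
  tendsto_of_liminf_eq_limsup (le_antisymm liminf_le_limsup (limsup_le_liminf_apply_smul hf hD hξ))
    rfl

theorem extRadial_closure (hf : RUUSC f D) (hD : ∀ t ∈ Set.Ico (0 : ℝ) 1, t • closure D ⊆ D) :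
    RUUSC (extRadial f D) (closure D) := by
  intro ε hε
  obtain ⟨η, hη0, hη⟩ := hf ε hε
  obtain ⟨η', hη'0, hη'⟩ := exists_apply_smul_le_liminf_add hf hD hε
  refine ⟨min η η', lt_min hη0 hη'0, fun ξ hξ t ht htη => ?_⟩
  rw [_root_.extRadial, if_pos (hD t ht (Set.smul_mem_smul_set hξ)), _root_.extRadial]
  split_ifs with hξD
  · exact hη ξ hξD t ht (htη.trans_le (min_le_left _ _))
  · exact (hη' ξ hξ t ht (htη.trans_le (min_le_right _ _))).trans
      (add_le_add_left liminf_le_limsup _)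

end RUUSC

theorem stmt_6_general {E : Type*} [NormedAddCommGroup E] [NormedSpace ℝ E]
    {D : Set E} (f : E → ℝ≥0∞) (hf : RUUSC f D)
    (hD : ∀ t ∈ Set.Ico (0 : ℝ) 1, t • closure D ⊆ D) :
    (∀ ξ ∈ closure D \ D, ∃ L : ℝ≥0∞,
        Tendsto (fun t : ℝ => f (t • ξ)) (𝓝[<] (1 : ℝ)) (𝓝 L)) ∧
    RUUSC (extRadial f D) (closure D) ∧
    (∀ ξ ∈ D, extRadial f D ξ = f ξ) :=
  ⟨fun _ hξ => ⟨_, hf.tendsto_apply_smul_limsup hD hξ.1⟩, hf.extRadial_closure hD,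
    fun _ hξ => if_pos hξ⟩

/-- Extension of r.u.u.s.c. functions to the closure of their domain. -/
theorem stmt_6 {E : Type*} [NormedAddCommGroup E] [NormedSpace ℝ E] [FiniteDimensional ℝ E]
    {D : Set E} (f : E → ℝ≥0∞) (hf : RUUSC f D)
    (hD : ∀ t ∈ Set.Ico (0 : ℝ) 1, t • closure D ⊆ D)
    (hlsc : ∀ ξ ∈ D, ∀ u : ℕ → E, (∀ n, u n ∈ D) → Tendsto u atTop (𝓝 ξ) →
      f ξ ≤ liminf (fun n => f (u n)) atTop) :
    (∀ ξ ∈ closure D \ D, ∃ L : ℝ≥0∞,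
        Tendsto (fun t : ℝ => f (t • ξ)) (𝓝[<] (1 : ℝ)) (𝓝 L)) ∧
    RUUSC (extRadial f D) (closure D) ∧
    (∀ ξ ∈ D, extRadial f D ξ = f ξ) :=
  stmt_6_general f hf hD
end

section
/- Let D ⊆ M and let f : M → [0,+∞] be r.u.u.s.c. in D, and assume t·cl(D) ⊆ D for all t ∈ [0,1). Then for every ξ in the topological boundary ∂D of D, limsup_{t→1⁻} f(tξ) = liminf_{t→1⁻} f(tξ) in [0,+∞]; that is, the limit lim_{t→1⁻} f(tξ) exists in [0,+∞]. -/
open Filter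
open scoped Pointwise ENNReal Topology

/-- Existence of radial limits at boundary points for r.u.u.s.c. functions. -/
theorem stmt_7 {E : Type*} [NormedAddCommGroup E] [NormedSpace ℝ E] [FiniteDimensional ℝ E]
    {D : Set E} (f : E → ℝ≥0∞) (hf : RUUSC f D)
    (hD : ∀ t ∈ Set.Ico (0 : ℝ) 1, t • closure D ⊆ D) :
    ∀ ξ ∈ frontier D,
      limsup (fun t : ℝ => f (t • ξ)) (𝓝[<] (1 : ℝ)) =
        liminf (fun t : ℝ => f (t • ξ)) (𝓝[<] (1 : ℝ)) := by
  intro ξ hξ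
  have hξc : ξ ∈ closure D := frontier_subset_closure hξ
  set g : ℝ → ℝ≥0∞ := fun t => f (t • ξ) with hg
  refine le_antisymm ?_ (Filter.liminf_le_limsup)
  by_contra hlt
  push_neg at hlt
  obtain ⟨c, hc1, hc2⟩ := exists_between hlt
  obtain ⟨c', hc'1, hc'2⟩ := exists_between hc2
  -- choose ε with c + ofReal ε ≤ c'
  have hcne : c ≠ ⊤ := (hc'1.trans_le le_top).ne
  set ε : ℝ := ((c' - c) ⊓ 1).toReal with hε
  have hsubpos : (0 : ℝ≥0∞) < c' - c := tsub_pos_of_lt hc'1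
  have hεpos : 0 < ε := by
    apply ENNReal.toReal_pos
    · exact (lt_inf_iff.mpr ⟨hsubpos, zero_lt_one⟩).ne'
    · exact ne_top_of_le_ne_top (by simp) inf_le_right
  have hεle : c + ENNReal.ofReal ε ≤ c' := by
    have : ENNReal.ofReal ε ≤ c' - c := by
      rw [hε, ENNReal.ofReal_toReal (ne_top_of_le_ne_top (by simp) inf_le_right)]
      exact inf_le_left
    calc c + ENNReal.ofReal ε ≤ c + (c' - c) := by gcongr
      _ = c' := add_tsub_cancel_of_le hc'1.le
  obtain ⟨η, hηpos, hη⟩ := hf ε hεpos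
  -- eventual bound
  have hev : ∀ᶠ r in 𝓝[<] (1 : ℝ), g r ≤ c' := by
    have hb : max (1 - η / 2) (1 / 2) < 1 := by
      apply max_lt <;> linarith
    filter_upwards [Ioo_mem_nhdsLT_of_mem ⟨hb, le_refl (1 : ℝ)⟩] with r hr
    obtain ⟨hr1, hr2⟩ := hr
    have hrhalf : (1 : ℝ) / 2 < r := lt_of_le_of_lt (le_max_right _ _) hr1
    have hrη : 1 - η / 2 < r := lt_of_le_of_lt (le_max_left _ _) hr1
    -- find t ∈ (r, 1) with g t < c
    have hfreq : ∃ᶠ t in 𝓝[<] (1 : ℝ), g t < c := frequently_lt_of_liminf_lt (by isBoundedDefault) hc1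
    obtain ⟨t, htg, htr, ht1⟩ :=
      (hfreq.and_eventually (Ioo_mem_nhdsLT_of_mem ⟨hr2, le_refl (1 : ℝ)⟩)).exists
    have htpos : 0 < t := lt_trans (by linarith) htr
    have htD : t • ξ ∈ D := hD t ⟨htpos.le, ht1⟩ (Set.smul_mem_smul_set hξc)
    set s : ℝ := r / t with hs
    have hs0 : 0 ≤ s := div_nonneg (by linarith) htpos.le
    have hs1 : s < 1 := (div_lt_one htpos).mpr htr
    have hsη : 1 - s < η := by
      rw [hs]
      have h1 : 1 - r / t = (t - r) / t := by field_simp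
      rw [h1, div_lt_iff₀ htpos]
      nlinarith
    have key := hη (t • ξ) htD s ⟨hs0, hs1⟩ hsη
    have hsmul : s • t • ξ = r • ξ := by
      rw [smul_smul, hs, div_mul_cancel₀ _ htpos.ne']
    rw [hsmul] at key
    calc g r ≤ g t + ENNReal.ofReal ε := key
      _ ≤ c + ENNReal.ofReal ε := by gcongr
      _ ≤ c' := hεle
  exact absurd (Filter.limsup_le_of_le (by isBoundedDefault) hev) (not_le.mpr hc'2)
end

section
/- Let D ⊆ M and let f : M → [0,+∞] be r.u.u.s.c. in D. Assume t·cl(D) ⊆ D for all t ∈ [0,1) and f is lower semicontinuous in D (for every ξ ∈ D and every sequence (ξ_n) ⊂ D with ξ_n → ξ, f(ξ) ≤ liminf_n f(ξ_n)). Define f̂ : M → [0,+∞] by f̂(ξ) = f(ξ) if ξ ∈ D, f̂(ξ) = lim_{t→1⁻} f(tξ) if ξ ∈ cl(D) \ D, and f̂(ξ) = +∞ otherwise. Then f̂ is lower semicontinuous in cl(D): for every ξ ∈ cl(D) and every sequence (ξ_n) ⊂ cl(D) with ξ_n → ξ, one has f̂(ξ) ≤ liminf_n f̂(ξ_n). 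-/
open Filter
open scoped Pointwise ENNReal Topology

private lemma ennreal_limsup_add_const {ι : Type*} (F : Filter ι) [NeBot F]
    (g : ι → ℝ≥0∞) (c : ℝ≥0∞) :
    limsup (fun i => g i + c) F = limsup g F + c :=
  limsup_add_const F g c ⟨⊤, Eventually.of_forall fun _ => le_top⟩
    (IsBoundedUnder.isCoboundedUnder_le ⟨⊥, Eventually.of_forall fun _ => bot_le⟩)

private lemma ennreal_liminf_add_const {ι : Type*} (F : Filter ι) [NeBot F]
    (g : ι → ℝ≥0∞) (c : ℝ≥0∞) :
    liminf (fun i => g i + c) F = liminf g F + c :=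
  liminf_add_const F g c
    (IsBoundedUnder.isCoboundedUnder_ge ⟨⊤, Eventually.of_forall fun _ => le_top⟩)
    ⟨⊥, Eventually.of_forall fun _ => bot_le⟩

/-- Key uniform bound: for `ξ ∈ closure D` and `t` close to `1`,
`f (t • ξ) ≤ extRadial f D ξ + ε`. -/
private lemma key_bound {E : Type*} [NormedAddCommGroup E] [NormedSpace ℝ E]
    {D : Set E} {f : E → ℝ≥0∞}
    (hD : ∀ t ∈ Set.Ico (0 : ℝ) 1, t • closure D ⊆ D)
    {ε η : ℝ}
    (hprop : ∀ ξ ∈ D, ∀ t ∈ Set.Ico (0 : ℝ) 1, 1 - t < η → f (t • ξ) ≤ f ξ + ENNReal.ofReal ε) :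
    ∀ ξ ∈ closure D, ∀ t ∈ Set.Ico (0 : ℝ) 1, 1 - t < η →
      f (t • ξ) ≤ extRadial f D ξ + ENNReal.ofReal ε := by
  intro ξ hξ t ht hlt
  by_cases hξD : ξ ∈ D
  · simpa [extRadial, hξD] using hprop ξ hξD t ht hlt
  · have hcl : extRadial f D ξ = limsup (fun s : ℝ => f (s • ξ)) (𝓝[<] (1 : ℝ)) := by
      simp [extRadial, hξD, hξ]
    rw [hcl]
    have hev : ∀ᶠ s in 𝓝[<] (1 : ℝ), f (t • ξ) ≤ f (s • ξ) + ENNReal.ofReal ε := by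
      filter_upwards [Ioo_mem_nhdsLT ht.2] with s hs
      have hs0 : 0 < s := lt_of_le_of_lt ht.1 hs.1
      have heq : t • ξ = (t / s) • (s • ξ) := by
        rw [smul_smul, div_mul_cancel₀ _ hs0.ne']
      rw [heq]
      have hmem : s • ξ ∈ D := hD s ⟨hs0.le, hs.2⟩ (Set.smul_mem_smul_set hξ)
      have hts : t / s ∈ Set.Ico (0 : ℝ) 1 :=
        ⟨div_nonneg ht.1 hs0.le, (div_lt_one hs0).2 hs.1⟩
      refine hprop (s • ξ) hmem (t / s) hts ?_
      have : t ≤ t / s := by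
        rw [le_div_iff₀ hs0]
        nlinarith [ht.1, hs.2.le]
      linarith
    calc f (t • ξ) ≤ limsup (fun s : ℝ => f (s • ξ) + ENNReal.ofReal ε) (𝓝[<] (1 : ℝ)) :=
          le_limsup_of_frequently_le' hev.frequently
      _ = limsup (fun s : ℝ => f (s • ξ)) (𝓝[<] (1 : ℝ)) + ENNReal.ofReal ε :=
          ennreal_limsup_add_const _ _ _

/-- The extension `f̂` is lower semicontinuous in `cl D`. -/
theorem stmt_8 {E : Type*} [NormedAddCommGroup E] [NormedSpace ℝ E] [FiniteDimensional ℝ E]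
    {D : Set E} (f : E → ℝ≥0∞) (hf : RUUSC f D)
    (hD : ∀ t ∈ Set.Ico (0 : ℝ) 1, t • closure D ⊆ D)
    (hlsc : ∀ ξ ∈ D, ∀ u : ℕ → E, (∀ n, u n ∈ D) → Tendsto u atTop (𝓝 ξ) →
      f ξ ≤ liminf (fun n => f (u n)) atTop) :
    ∀ ξ ∈ closure D, ∀ u : ℕ → E, (∀ n, u n ∈ closure D) → Tendsto u atTop (𝓝 ξ) →
      extRadial f D ξ ≤ liminf (fun n => extRadial f D (u n)) atTop := by
  intro ξ hξ u hu htend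
  set L := liminf (fun n => extRadial f D (u n)) atTop with hL
  refine ENNReal.le_of_forall_pos_le_add fun ε hε _ => ?_
  obtain ⟨η, hη, hprop⟩ := hf ε (by exact_mod_cast hε)
  have hofε : ENNReal.ofReal (ε : ℝ) = (ε : ℝ≥0∞) := ENNReal.ofReal_coe_nnreal
  -- Main pointwise bound near t = 1
  have hmain : ∀ t ∈ Set.Ico (0 : ℝ) 1, 1 - t < η → f (t • ξ) ≤ L + ε := by
    intro t ht hlt
    have htD : t • ξ ∈ D := hD t ht (Set.smul_mem_smul_set hξ)
    have h1 : f (t • ξ) ≤ liminf (fun n => f (t • u n)) atTop :=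
      hlsc _ htD _ (fun n => hD t ht (Set.smul_mem_smul_set (hu n))) (htend.const_smul t)
    have h2 : liminf (fun n => f (t • u n)) atTop
        ≤ liminf (fun n => extRadial f D (u n) + ENNReal.ofReal ε) atTop := by
      refine liminf_le_liminf (Eventually.of_forall fun n => ?_)
      exact key_bound hD hprop (u n) (hu n) t ht hlt
    have h3 : liminf (fun n => extRadial f D (u n) + ENNReal.ofReal ε) atTop
        = L + ENNReal.ofReal ε := ennreal_liminf_add_const _ _ _
    calc f (t • ξ) ≤ _ := h1
      _ ≤ _ := h2
      _ = L + ENNReal.ofReal ε := h3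
      _ = L + ε := by rw [hofε]
  by_cases hξD : ξ ∈ D
  · -- use a radial sequence tₙ • ξ → ξ
    have hrad : extRadial f D ξ = f ξ := by simp [extRadial, hξD]
    rw [hrad]
    set t : ℕ → ℝ := fun n => 1 - 1 / (n + 1) with htdef
    have htmem : ∀ n, t n ∈ Set.Ico (0 : ℝ) 1 := by
      intro n
      have h1 : 0 < 1 / ((n : ℝ) + 1) := by positivity
      have h2 : 1 / ((n : ℝ) + 1) ≤ 1 := by
        rw [div_le_one (by positivity)]; linarith [Nat.cast_nonneg (α := ℝ) n]
      have he : t n = 1 - 1 / ((n : ℝ) + 1) := rfl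
      rw [he, Set.mem_Ico]
      constructor <;> linarith
    have httend : Tendsto t atTop (𝓝 (1 : ℝ)) := by
      have : Tendsto (fun n : ℕ => 1 / ((n : ℝ) + 1)) atTop (𝓝 0) :=
        tendsto_one_div_add_atTop_nhds_zero_nat
      simpa [htdef] using tendsto_const_nhds.sub this
    have hseqD : ∀ n, t n • ξ ∈ D := fun n =>
      hD (t n) (htmem n) (Set.smul_mem_smul_set hξ)
    have hseqtend : Tendsto (fun n => t n • ξ) atTop (𝓝 ξ) := by
      have := httend.smul_const ξ
      simpa using this
    have h1 : f ξ ≤ liminf (fun n => f (t n • ξ)) atTop := hlsc ξ hξD _ hseqD hseqtend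
    refine h1.trans (liminf_le_of_frequently_le' ?_)
    have hev : ∀ᶠ n in atTop, 1 - t n < η := by
      have : ∀ᶠ n in atTop, t n ∈ Set.Ioi (1 - η) :=
        httend.eventually (Ioi_mem_nhds (by linarith))
      filter_upwards [this] with n hn
      simp only [Set.mem_Ioi] at hn; linarith
    exact (hev.mono fun n hn => hmain (t n) (htmem n) hn).frequently
  · have hrad : extRadial f D ξ = limsup (fun s : ℝ => f (s • ξ)) (𝓝[<] (1 : ℝ)) := by
      simp [extRadial, hξD, hξ]
    rw [hrad]
    refine limsup_le_of_le (by isBoundedDefault) ?_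
    have hlt1 : max 0 (1 - η) < 1 := by
      rw [max_lt_iff]; constructor <;> linarith
    filter_upwards [Ioo_mem_nhdsLT hlt1] with s hs
    have hs0 : (0 : ℝ) ≤ s := le_of_lt (lt_of_le_of_lt (le_max_left _ _) hs.1)
    have hsη : 1 - s < η := by
      have := lt_of_le_of_lt (le_max_right 0 (1 - η)) hs.1
      linarith
    exact hmain s ⟨hs0, hs.2⟩ hsη
end

section
/- Let D ⊆ M and let f : M → [0,+∞] be r.u.u.s.c. in D. Assume t·cl(D) ⊆ D for all t ∈ [0,1) and f is lower semicontinuous in D (for every ξ ∈ D and every sequence (ξ_n) ⊂ D with ξ_n → ξ, f(ξ) ≤ liminf_n f(ξ_n)). Define f̂ : M → [0,+∞] by f̂(ξ) = f(ξ) if ξ ∈ D, f̂(ξ) = lim_{t→1⁻} f(tξ) if ξ ∈ cl(D) \ D, and f̂(ξ) = +∞ otherwise. Then f̂ is radially continuous in cl(D): for every ξ ∈ cl(D), lim_{t→1⁻} f̂(tξ) = f̂(ξ). -/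
open Filter
open scoped Pointwise ENNReal Topology

/-!
Fix `ξ ∈ cl D`, so that `tξ ∈ D` for `t ∈ [0,1)`, and write `g(t) = f(tξ)`.
Lower semicontinuity along the ray through a point of `D` gives `f(x) ≤ liminf_{s→1⁻} f(sx)`,
and uniform radial upper semicontinuity gives `f(t·y) ≤ f(y) + ε` for all `y ∈ D` once `t` is
close to `1`. Applying both at `x = tξ` and `y = sξ` yields `g(t) ≤ liminf g + ε` for `t` near
`1`, hence `limsup g ≤ liminf g`: the radial limit exists. It equals `f̂(ξ)` (for `ξ ∈ D` by
the same two inequalities at `ξ` itself), and `f̂ = f` on the ray `tξ`, `t ∈ [0,1)`.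
-/

def SeqLowerSemicontinuousOn {E : Type*} [TopologicalSpace E] (f : E → ℝ≥0∞) (D : Set E) :
    Prop :=
  ∀ ξ ∈ D, ∀ u : ℕ → E, (∀ n, u n ∈ D) → Tendsto u atTop (𝓝 ξ) →
    f ξ ≤ liminf (fun n => f (u n)) atTop

lemma eventually_mem_Ico_nhdsLT_one : ∀ᶠ t : ℝ in 𝓝[<] 1, t ∈ Set.Ico (0 : ℝ) 1 :=
  mem_of_superset (Ioo_mem_nhdsLT zero_lt_one) Set.Ioo_subset_Ico_self

section Radial

variable {E : Type*} [NormedAddCommGroup E] [NormedSpace ℝ E] {f : E → ℝ≥0∞}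

lemma RUUSC.eventually_le {A : Set E} (hf : RUUSC f A) {ε : ℝ} (hε : 0 < ε) :
    ∀ᶠ t : ℝ in 𝓝[<] 1, ∀ ξ ∈ A, f (t • ξ) ≤ f ξ + ENNReal.ofReal ε := by
  obtain ⟨η, hη, hfη⟩ := hf ε hε
  have hclose : ∀ᶠ t : ℝ in 𝓝[<] 1, 1 - t < η := by
    filter_upwards [Ioo_mem_nhdsLT (sub_lt_self 1 hη)] with t ht
    linarith [ht.1]
  filter_upwards [eventually_mem_Ico_nhdsLT_one, hclose] with t ht hte ξ hξ
  exact hfη ξ hξ t ht hte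

lemma RUUSC.limsup_smul_le {A : Set E} (hf : RUUSC f A) {ξ : E} (hξ : ξ ∈ A) :
    limsup (fun t : ℝ => f (t • ξ)) (𝓝[<] 1) ≤ f ξ := by
  refine ENNReal.le_of_forall_pos_le_add fun ε hε _ => ?_
  refine limsup_le_of_le (by isBoundedDefault) ?_
  filter_upwards [hf.eventually_le hε] with t ht
  simpa using ht ξ hξ

lemma SeqLowerSemicontinuousOn.le_liminf_smul {D : Set E} (hlsc : SeqLowerSemicontinuousOn f D)
    {x : E} (hx : x ∈ D) (hray : ∀ᶠ s : ℝ in 𝓝[<] 1, s • x ∈ D) :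
    f x ≤ liminf (fun s : ℝ => f (s • x)) (𝓝[<] 1) := by
  refine le_of_forall_gt_imp_ge_of_dense fun c hc => ?_
  obtain ⟨s, hs, hsx⟩ := exists_seq_forall_of_frequently
    ((frequently_lt_of_liminf_lt (by isBoundedDefault) hc).and_eventually hray)
  have hsx_tendsto : Tendsto (fun n => s n • x) atTop (𝓝 x) := by
    simpa using (hs.mono_right nhdsWithin_le_nhds).smul_const x
  calc f x ≤ liminf (fun n => f (s n • x)) atTop :=
        hlsc x hx _ (fun n => (hsx n).2) hsx_tendsto
    _ ≤ c := liminf_le_of_frequently_le' (Frequently.of_forall fun n => (hsx n).1.le)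

variable {D : Set E} {ξ : E}

lemma limsup_smul_le_liminf_smul (hf : RUUSC f D) (hlsc : SeqLowerSemicontinuousOn f D)
    (hray : ∀ t ∈ Set.Ico (0 : ℝ) 1, t • ξ ∈ D) :
    limsup (fun t : ℝ => f (t • ξ)) (𝓝[<] 1) ≤ liminf (fun t : ℝ => f (t • ξ)) (𝓝[<] 1) := by
  refine ENNReal.le_of_forall_pos_le_add fun ε hε _ => limsup_le_of_le (by isBoundedDefault) ?_
  filter_upwards [eventually_mem_Ico_nhdsLT_one, hf.eventually_le hε] with t ht hft
  have hsmul : ∀ s : ℝ, s • t • ξ = t • s • ξ := fun s => by rw [smul_smul, smul_smul, mul_comm]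
  have hray_t : ∀ᶠ s : ℝ in 𝓝[<] 1, s • t • ξ ∈ D := by
    filter_upwards [eventually_mem_Ico_nhdsLT_one] with s hs
    rw [hsmul, smul_smul]
    exact hray _ ⟨mul_nonneg ht.1 hs.1, mul_lt_one_of_nonneg_of_lt_one_left ht.1 ht.2 hs.2.le⟩
  calc f (t • ξ) ≤ liminf (fun s : ℝ => f (s • t • ξ)) (𝓝[<] 1) :=
        hlsc.le_liminf_smul (hray t ht) hray_t
    _ ≤ liminf (fun s : ℝ => f (s • ξ) + ENNReal.ofReal ε) (𝓝[<] 1) := by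
        refine liminf_le_liminf ?_
        filter_upwards [eventually_mem_Ico_nhdsLT_one] with s hs
        rw [hsmul]
        exact hft _ (hray s hs)
    _ = liminf (fun s : ℝ => f (s • ξ)) (𝓝[<] 1) + ENNReal.ofReal ε :=
        liminf_add_const _ _ _ (by isBoundedDefault) (by isBoundedDefault)
    _ ≤ _ := by simp

lemma tendsto_smul_limsup (hf : RUUSC f D) (hlsc : SeqLowerSemicontinuousOn f D)
    (hray : ∀ t ∈ Set.Ico (0 : ℝ) 1, t • ξ ∈ D) :
    Tendsto (fun t : ℝ => f (t • ξ)) (𝓝[<] 1) (𝓝 (limsup (fun t : ℝ => f (t • ξ)) (𝓝[<] 1))) :=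
  tendsto_of_le_liminf_of_limsup_le (limsup_smul_le_liminf_smul hf hlsc hray) le_rfl

lemma extRadial_eq_limsup (hf : RUUSC f D) (hlsc : SeqLowerSemicontinuousOn f D)
    (hray : ∀ t ∈ Set.Ico (0 : ℝ) 1, t • ξ ∈ D) (hξ : ξ ∈ closure D) :
    extRadial f D ξ = limsup (fun t : ℝ => f (t • ξ)) (𝓝[<] 1) := by
  by_cases hξD : ξ ∈ D
  · rw [extRadial, if_pos hξD]
    refine le_antisymm ?_ (hf.limsup_smul_le hξD)
    calc f ξ ≤ liminf (fun t : ℝ => f (t • ξ)) (𝓝[<] 1) :=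
          hlsc.le_liminf_smul hξD (eventually_mem_Ico_nhdsLT_one.mono hray)
      _ ≤ _ := liminf_le_limsup
  · rw [extRadial, if_neg hξD, if_pos hξ]

lemma extRadial_smul_eventuallyEq (hray : ∀ t ∈ Set.Ico (0 : ℝ) 1, t • ξ ∈ D) :
    (fun t : ℝ => f (t • ξ)) =ᶠ[𝓝[<] 1] fun t => extRadial f D (t • ξ) := by
  filter_upwards [eventually_mem_Ico_nhdsLT_one] with t ht
  rw [extRadial, if_pos (hray t ht)]

end Radial

theorem stmt_9_general {E : Type*} [NormedAddCommGroup E] [NormedSpace ℝ E]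
    {D : Set E} (f : E → ℝ≥0∞) (hf : RUUSC f D)
    (hD : ∀ t ∈ Set.Ico (0 : ℝ) 1, t • closure D ⊆ D)
    (hlsc : ∀ ξ ∈ D, ∀ u : ℕ → E, (∀ n, u n ∈ D) → Tendsto u atTop (𝓝 ξ) →
      f ξ ≤ liminf (fun n => f (u n)) atTop) :
    ∀ ξ ∈ closure D,
      Tendsto (fun t : ℝ => extRadial f D (t • ξ)) (𝓝[<] (1 : ℝ))
        (𝓝 (extRadial f D ξ)) := by
  intro ξ hξ
  have hray : ∀ t ∈ Set.Ico (0 : ℝ) 1, t • ξ ∈ D := fun t ht =>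
    hD t ht (Set.smul_mem_smul_set hξ)
  rw [extRadial_eq_limsup hf hlsc hray hξ]
  exact (tendsto_smul_limsup hf hlsc hray).congr' (extRadial_smul_eventuallyEq hray)

/-- The extension `f̂` is radially continuous in `cl D`. -/
theorem stmt_9 {E : Type*} [NormedAddCommGroup E] [NormedSpace ℝ E] [FiniteDimensional ℝ E]
    {D : Set E} (f : E → ℝ≥0∞) (hf : RUUSC f D)
    (hD : ∀ t ∈ Set.Ico (0 : ℝ) 1, t • closure D ⊆ D)
    (hlsc : ∀ ξ ∈ D, ∀ u : ℕ → E, (∀ n, u n ∈ D) → Tendsto u atTop (𝓝 ξ) →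
      f ξ ≤ liminf (fun n => f (u n)) atTop) :
    ∀ ξ ∈ closure D,
      Tendsto (fun t : ℝ => extRadial f D (t • ξ)) (𝓝[<] (1 : ℝ))
        (𝓝 (extRadial f D ξ)) :=
  stmt_9_general f hf hD hlsc
end

section
/- Let C ⊆ M be a convex set and let ρ > 0 be such that the closed ball {ξ ∈ M : ‖ξ‖ ≤ ρ} is contained in int C. Then for every r > 0, {ξ ∈ M : dist(ξ, cl(C)) ≤ ρ·r/2} ⊆ (1+r)·(int C). -/
open scoped Pointwise

/-- A neighborhood of `cl C` of size `ρ r / 2` is contained in `(1+r) • int C`. -/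
theorem stmt_10 {E : Type*} [NormedAddCommGroup E] [NormedSpace ℝ E] [FiniteDimensional ℝ E]
    {C : Set E} (hconv : Convex ℝ C) {ρ : ℝ} (hρ : 0 < ρ)
    (hball : Metric.closedBall (0 : E) ρ ⊆ interior C) :
    ∀ r : ℝ, 0 < r →
      {ξ : E | Metric.infDist ξ (closure C) ≤ ρ * r / 2} ⊆ (1 + r) • interior C := by
  intro r hr ξ hξ
  have h0 : (0 : E) ∈ closure C :=
    subset_closure (interior_subset (hball (by simp [hρ.le])))
  have hne : (closure C).Nonempty := ⟨0, h0⟩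
  have hlt : Metric.infDist ξ (closure C) < ρ * r := by
    have : ρ * r / 2 < ρ * r := by nlinarith
    exact lt_of_le_of_lt hξ this
  obtain ⟨ζ, hζ, hdζ⟩ := (Metric.infDist_lt_iff hne).mp hlt
  set η : E := r⁻¹ • (ξ - ζ) with hη
  have hηmem : η ∈ interior C := by
    apply hball
    rw [Metric.mem_closedBall, dist_zero_right, hη, norm_smul, norm_inv,
      Real.norm_eq_abs, abs_of_pos hr]
    rw [dist_eq_norm] at hdζ
    rw [inv_mul_le_iff₀ hr]
    linarith [hdζ.le]
  have h1r : (0:ℝ) < 1 + r := by linarith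
  have hcombo : (1/(1+r)) • ζ + (r/(1+r)) • η ∈ interior C :=
    hconv.combo_closure_interior_mem_interior hζ hηmem
      (by positivity) (by positivity) (by field_simp)
  have : ξ = (1 + r) • ((1/(1+r)) • ζ + (r/(1+r)) • η) := by
    rw [smul_add, smul_smul, smul_smul, hη, smul_smul]
    have h2 : (1 + r) * (r / (1 + r)) * r⁻¹ = 1 := by field_simp
    rw [mul_one_div, div_self h1r.ne', h2]
    simp
  rw [this]
  exact Set.smul_mem_smul_set hcombo
end

section
/- Let g : M^{d×d} → [0,+∞) be continuous and nonnegative on the closed ball cl(B(I)) = {ξ : ‖ξ − I‖ ≤ 1}, and let h : [0,1) → [0,+∞) be convex with h(t) ≥ C(1/(1−t^α) − 1) for all t ∈ [0,1), for some constants C > 0 and α > 0. Define f(ξ) = g(ξ) + h(‖ξ−I‖) for ξ ∈ B(I) and f(ξ) = +∞ otherwise. Then for every sequence (ξ_n) ⊂ B(I) with det ξ_n → 0, one has f(ξ_n) → +∞. -/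
/-! Proof idea: every matrix within operator-norm distance `< 1` of `I` is invertible, so on
each compact ball `‖ξ - I‖ ≤ r < 1` the determinant is bounded away from `0`. Hence
`det ξₙ → 0` forces `‖ξₙ - I‖ → 1⁻`, and then `f(ξₙ) ≥ h(‖ξₙ - I‖) ≥ C (1/(1 - tₙ^α) - 1) → ∞`. -/

open Filter
open scoped Matrix.Norms.L2Operator ENNReal Topology

namespace Matrix

variable {n : Type*} [Fintype n] [DecidableEq n]

theorem isUnit_of_norm_sub_one_lt_one {x : Matrix n n ℝ} (hx : ‖x - 1‖ < 1) : IsUnit x := by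
  rw [← norm_neg, neg_sub] at hx
  simpa using (Units.oneSub (1 - x) hx).isUnit

theorem det_ne_zero_of_norm_sub_one_lt_one {x : Matrix n n ℝ} (hx : ‖x - 1‖ < 1) :
    x.det ≠ 0 :=
  ((isUnit_iff_isUnit_det x).mp (isUnit_of_norm_sub_one_lt_one hx)).ne_zero

theorem eventually_lt_norm_sub_one_of_tendsto_det {ι : Type*} {l : Filter ι}
    {ξ : ι → Matrix n n ℝ} (hdet : Tendsto (fun i => (ξ i).det) l (𝓝 0)) {r : ℝ} (hr : r < 1) :
    ∀ᶠ i in l, r < ‖ξ i - 1‖ := by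
  have hpos : ∀ x ∈ Metric.closedBall (1 : Matrix n n ℝ) r, 0 < |x.det| := fun x hx =>
    abs_pos.mpr <| det_ne_zero_of_norm_sub_one_lt_one <|
      (mem_closedBall_iff_norm.mp hx).trans_lt hr
  obtain ⟨m, hm, hmin⟩ := (isCompact_closedBall (1 : Matrix n n ℝ) r).exists_forall_le'
    (continuous_id.matrix_det.abs.continuousOn) hpos
  have hsmall : ∀ᶠ i in l, |(ξ i).det| < m := by
    have := hdet.abs
    rw [abs_zero] at this
    exact this.eventually (gt_mem_nhds hm)
  filter_upwards [hsmall] with i hi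
  by_contra hle
  exact (hmin (ξ i) (mem_closedBall_iff_norm.mpr (not_lt.mp hle))).not_gt hi

theorem tendsto_norm_sub_one_of_tendsto_det {ι : Type*} {l : Filter ι}
    {ξ : ι → Matrix n n ℝ} (hξ : ∀ i, ‖ξ i - 1‖ < 1)
    (hdet : Tendsto (fun i => (ξ i).det) l (𝓝 0)) :
    Tendsto (fun i => ‖ξ i - 1‖) l (𝓝[<] 1) :=
  tendsto_nhdsWithin_iff.mpr
    ⟨tendsto_order.mpr ⟨fun _ hr => eventually_lt_norm_sub_one_of_tendsto_det hdet hr,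
      fun _ hr => Eventually.of_forall fun i => (hξ i).trans hr⟩,
    Eventually.of_forall hξ⟩

end Matrix

theorem tendsto_one_sub_rpow_nhdsLT_one {α : ℝ} (hα : 0 < α) :
    Tendsto (fun t : ℝ => 1 - t ^ α) (𝓝[<] 1) (𝓝[>] 0) := by
  have hcont : Tendsto (fun t : ℝ => 1 - t ^ α) (𝓝 1) (𝓝 0) := by
    simpa using (tendsto_const_nhds (x := (1 : ℝ))).sub
      (Real.continuousAt_rpow_const 1 α (Or.inl one_ne_zero)).tendsto
  refine tendsto_nhdsWithin_iff.mpr ⟨hcont.mono_left nhdsWithin_le_nhds, ?_⟩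
  filter_upwards [Ioo_mem_nhdsLT zero_lt_one] with t ht
  exact sub_pos.mpr (Real.rpow_lt_one ht.1.le ht.2 hα)

theorem tendsto_inv_one_sub_rpow_sub_one_atTop {α : ℝ} (hα : 0 < α) :
    Tendsto (fun t : ℝ => 1 / (1 - t ^ α) - 1) (𝓝[<] 1) atTop := by
  simpa [one_div, sub_eq_add_neg] using
    (tendsto_inv_nhdsGT_zero.comp (tendsto_one_sub_rpow_nhdsLT_one hα)).atTop_add
      (tendsto_const_nhds (x := (-1 : ℝ)))

theorem stmt_13_general {d : ℕ} (g : Matrix (Fin d) (Fin d) ℝ → ℝ)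
    (hg0 : ∀ ξ ∈ Metric.closedBall (1 : Matrix (Fin d) (Fin d) ℝ) 1, 0 ≤ g ξ)
    (h : ℝ → ℝ)
    (C α : ℝ) (hC : 0 < C) (hα : 0 < α)
    (hlow : ∀ t ∈ Set.Ico (0 : ℝ) 1, C * (1 / (1 - t ^ α) - 1) ≤ h t)
    (f : Matrix (Fin d) (Fin d) ℝ → ℝ≥0∞)
    (hf : ∀ ξ, f ξ = if ‖ξ - 1‖ < 1 then ENNReal.ofReal (g ξ + h ‖ξ - 1‖) else ⊤) :
    ∀ ξ : ℕ → Matrix (Fin d) (Fin d) ℝ, (∀ n, ‖ξ n - 1‖ < 1) →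
      Tendsto (fun n => (ξ n).det) atTop (𝓝 0) →
      Tendsto (fun n => f (ξ n)) atTop (𝓝 ⊤) := by
  intro ξ hξ hdet
  have hbound : Tendsto (fun n => C * (1 / (1 - ‖ξ n - 1‖ ^ α) - 1)) atTop atTop :=
    ((tendsto_inv_one_sub_rpow_sub_one_atTop hα).comp
      (Matrix.tendsto_norm_sub_one_of_tendsto_det hξ hdet)).const_mul_atTop hC
  have hsum : Tendsto (fun n => g (ξ n) + h ‖ξ n - 1‖) atTop atTop := by
    refine tendsto_atTop_mono (fun n => ?_) hbound
    have hg := hg0 (ξ n) (mem_closedBall_iff_norm.mpr (hξ n).le)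
    have hh := hlow _ ⟨norm_nonneg _, hξ n⟩
    linarith
  refine (ENNReal.tendsto_ofReal_atTop.comp hsum).congr fun n => ?_
  rw [hf, if_pos (hξ n), Function.comp_apply]

/-- Along any sequence in `B(I)` whose determinants tend to `0`,
the density `f` tends to `+∞`. -/
theorem stmt_13 {d : ℕ} (g : Matrix (Fin d) (Fin d) ℝ → ℝ)
    (hgc : ContinuousOn g (Metric.closedBall (1 : Matrix (Fin d) (Fin d) ℝ) 1))
    (hg0 : ∀ ξ ∈ Metric.closedBall (1 : Matrix (Fin d) (Fin d) ℝ) 1, 0 ≤ g ξ)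
    (h : ℝ → ℝ) (hhconv : ConvexOn ℝ (Set.Ico (0 : ℝ) 1) h)
    (hh0 : ∀ t ∈ Set.Ico (0 : ℝ) 1, 0 ≤ h t)
    (C α : ℝ) (hC : 0 < C) (hα : 0 < α)
    (hlow : ∀ t ∈ Set.Ico (0 : ℝ) 1, C * (1 / (1 - t ^ α) - 1) ≤ h t)
    (f : Matrix (Fin d) (Fin d) ℝ → ℝ≥0∞)
    (hf : ∀ ξ, f ξ = if ‖ξ - 1‖ < 1 then ENNReal.ofReal (g ξ + h ‖ξ - 1‖) else ⊤) :
    ∀ ξ : ℕ → Matrix (Fin d) (Fin d) ℝ, (∀ n, ‖ξ n - 1‖ < 1) →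
      Tendsto (fun n => (ξ n).det) atTop (𝓝 0) →
      Tendsto (fun n => f (ξ n)) atTop (𝓝 ⊤) :=
  stmt_13_general g hg0 h C α hC hα hlow f hf
end

section
/- Let g : M^{d×d} → [0,+∞) be continuous and nonnegative on the closed ball cl(B(I)) = {ξ : ‖ξ − I‖ ≤ 1}, let h : [0,1) → [0,+∞) be convex and continuous with h(t) ≥ C(1/(1−t^α) − 1) for all t ∈ [0,1) (for some C > 0, α > 0), and define f(ξ) = g(ξ) + h(‖ξ−I‖) for ξ ∈ B(I), f(ξ) = +∞ otherwise. Let A : ℝ^d → ℝ be Y-periodic (Y = (0,1)^d) with c ≤ A(x) ≤ c' for all x ∈ ℝ^d, for some 0 < c ≤ c'. Define W₀ : ℝ^d × M^{d×d} → [0,+∞] by W₀(x,ξ) = A(x)·f(ξ + I). Then W₀ satisfies, with respect to the open unit ball C = B(0,1) = {ξ : ‖ξ‖ < 1}: (H1) for every ε > 0 there exists η > 0 such that for every x ∈ ℝ^d, every ξ with W₀(x,ξ) < +∞ and every t ∈ [0,1), 1−t ≤ η implies W₀(x,tξ) ≤ W₀(x,ξ) + ε; (H2) for every compact K ⊆ B(0,1),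 sup_{x∈ℝ^d} sup_{ξ∈K} W₀(x,ξ) < +∞; (H3) for every s > 0 there exists a compact set K_s ⊆ B(0,1) such that W₀(x,ξ) ≥ s for every x ∈ ℝ^d and every ξ in the closed unit ball with ξ ∉ K_s. -/
/-!
Write `F ξ = g (ξ + 1) + h ‖ξ‖`, so that `W₀ x ξ = A x F ξ` on the open unit ball and `W₀ = ∞`
off it; since `c ≤ A ≤ c'`, each of (H1)–(H3) reduces to a property of `F` alone. (H1) splits
along the two summands: `g (· + 1)` is uniformly continuous on the compact unit ball, and
convexity gives `h (t r) ≤ t h r + (1 - t) h 0 ≤ h r + (1 - t) h 0`. (H2) holds because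
`g (· + 1)` is continuous on the closed ball and a convex function of one variable is bounded on
a compact interval by its values at the endpoints. (H3) holds because `h r ≥ C (1 / (1 - r ^ α) - 1)`
blows up as `r → 1⁻` while `g ≥ 0`.
-/

open Set Metric Filter Topology
open scoped Matrix.Norms.L2Operator ENNReal

section AlmostRadiallyDecreasing

variable {E : Type*} [NormedAddCommGroup E] [NormedSpace ℝ E]

def AlmostRadiallyDecreasing (F : E → ℝ) (S : Set E) : Prop :=
  ∀ ε > 0, ∃ η > 0, ∀ ξ ∈ S, ∀ t ∈ Icc (0 : ℝ) 1, 1 - t ≤ η → F (t • ξ) ≤ F ξ + ε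

namespace AlmostRadiallyDecreasing

variable {F G : E → ℝ} {S T : Set E}

theorem mono (hF : AlmostRadiallyDecreasing F S) (hTS : T ⊆ S) :
    AlmostRadiallyDecreasing F T := fun ε hε ↦
  (hF ε hε).imp fun _ ⟨hη, hF⟩ ↦ ⟨hη, fun ξ hξ ↦ hF ξ (hTS hξ)⟩

theorem add (hF : AlmostRadiallyDecreasing F S) (hG : AlmostRadiallyDecreasing G S) :
    AlmostRadiallyDecreasing (F + G) S := by
  intro ε hε
  obtain ⟨η₁, hη₁, hF⟩ := hF (ε / 2) (half_pos hε)
  obtain ⟨η₂, hη₂, hG⟩ := hG (ε / 2) (half_pos hε)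
  refine ⟨min η₁ η₂, lt_min hη₁ hη₂, fun ξ hξ t ht htη ↦ ?_⟩
  have hFt := hF ξ hξ t ht (htη.trans (min_le_left _ _))
  have hGt := hG ξ hξ t ht (htη.trans (min_le_right _ _))
  simp only [Pi.add_apply]
  linarith

theorem comp_norm {φ : ℝ → ℝ} {S : Set ℝ} (hφ : AlmostRadiallyDecreasing φ S) :
    AlmostRadiallyDecreasing (fun ξ : E ↦ φ ‖ξ‖) (norm ⁻¹' S) := by
  intro ε hε
  obtain ⟨η, hη, hφ⟩ := hφ ε hε
  refine ⟨η, hη, fun ξ hξ t ht htη ↦ ?_⟩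
  show φ ‖t • ξ‖ ≤ φ ‖ξ‖ + ε
  rw [norm_smul, Real.norm_of_nonneg ht.1]
  exact hφ ‖ξ‖ hξ t ht htη

end AlmostRadiallyDecreasing

theorem ContinuousOn.almostRadiallyDecreasing [ProperSpace E] {F : E → ℝ}
    (hF : ContinuousOn F (closedBall 0 1)) : AlmostRadiallyDecreasing F (closedBall 0 1) := by
  intro ε hε
  obtain ⟨δ, hδ, hFδ⟩ := uniformContinuousOn_iff_le.mp
    ((isCompact_closedBall 0 1).uniformContinuousOn_of_continuous hF) ε hε
  refine ⟨δ, hδ, fun ξ hξ t ht htδ ↦ ?_⟩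
  rw [mem_closedBall_zero_iff] at hξ
  have htξ : t • ξ ∈ closedBall (0 : E) 1 := by
    rw [mem_closedBall_zero_iff, norm_smul, Real.norm_of_nonneg ht.1]
    exact mul_le_one₀ ht.2 (norm_nonneg ξ) hξ
  have hdist : dist (t • ξ) ξ ≤ δ := by
    calc dist (t • ξ) ξ = (1 - t) * ‖ξ‖ := by
          rw [dist_eq_norm, show t • ξ - ξ = -((1 - t) • ξ) by rw [sub_smul, one_smul]; abel,
            norm_neg, norm_smul, Real.norm_of_nonneg (sub_nonneg.mpr ht.2)]
      _ ≤ 1 - t := mul_le_of_le_one_right (sub_nonneg.mpr ht.2) hξ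
      _ ≤ δ := htδ
  have hFt := hFδ _ htξ ξ (mem_closedBall_zero_iff.mpr hξ) hdist
  rw [Real.dist_eq] at hFt
  linarith [(abs_le.mp hFt).2]

theorem ConvexOn.almostRadiallyDecreasing {φ : E → ℝ} {S : Set E} (hφ : ConvexOn ℝ S φ)
    (h0 : (0 : E) ∈ S) (hφ0 : ∀ ξ ∈ S, 0 ≤ φ ξ) : AlmostRadiallyDecreasing φ S := by
  intro ε hε
  have hφ00 := hφ0 0 h0
  refine ⟨ε / (φ 0 + 1), by positivity, fun ξ hξ t ht htη ↦ ?_⟩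
  have hconv : φ (t • ξ) ≤ t * φ ξ + (1 - t) * φ 0 := by
    simpa using hφ.2 hξ h0 ht.1 (sub_nonneg.mpr ht.2) (add_sub_cancel t 1)
  have hgap : (1 - t) * φ 0 ≤ ε := by
    calc (1 - t) * φ 0 ≤ ε / (φ 0 + 1) * (φ 0 + 1) := by gcongr; linarith
      _ = ε := div_mul_cancel₀ ε (by positivity)
  linarith [mul_le_of_le_one_left (hφ0 ξ hξ) ht.2]

end AlmostRadiallyDecreasing

theorem ConvexOn.bddAbove_image_of_isCompact {S L : Set ℝ} {φ : ℝ → ℝ} (hφ : ConvexOn ℝ S φ)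
    (hL : IsCompact L) (hLS : L ⊆ S) : BddAbove (φ '' L) := by
  rcases L.eq_empty_or_nonempty with rfl | hne
  · simp
  refine ⟨max (φ (sInf L)) (φ (sSup L)), ?_⟩
  rintro _ ⟨t, ht, rfl⟩
  exact hφ.le_max_of_mem_Icc (hLS (hL.sInf_mem hne)) (hLS (hL.sSup_mem hne))
    (hL.isBounded.subset_Icc_sInf_sSup ht)

theorem one_le_one_div_one_sub_rpow {t α : ℝ} (ht : t ∈ Ico 0 1) (hα : 0 < α) :
    1 ≤ 1 / (1 - t ^ α) :=
  one_le_one_div (sub_pos.mpr (Real.rpow_lt_one ht.1 ht.2 hα))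
    (sub_le_self 1 (Real.rpow_nonneg ht.1 α))

theorem tendsto_one_div_one_sub_rpow_nhdsLT_one {α : ℝ} (hα : 0 < α) :
    Tendsto (fun t : ℝ ↦ 1 / (1 - t ^ α)) (𝓝[<] 1) atTop := by
  have hlim : Tendsto (fun t : ℝ ↦ 1 - t ^ α) (𝓝[<] 1) (𝓝[>] 0) := by
    refine tendsto_nhdsWithin_iff.mpr ⟨?_, ?_⟩
    · have hcont : ContinuousAt (fun t : ℝ ↦ 1 - t ^ α) 1 :=
        continuousAt_const.sub (Real.continuousAt_rpow_const 1 α (Or.inl one_ne_zero))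
      simpa using hcont.tendsto.mono_left nhdsWithin_le_nhds
    · filter_upwards [Ioo_mem_nhdsLT zero_lt_one] with t ht
      exact sub_pos.mpr (Real.rpow_lt_one ht.1.le ht.2 hα)
  simpa only [one_div, Function.comp_def] using tendsto_inv_nhdsGT_zero.comp hlim

theorem tendsto_atTop_of_one_div_one_sub_rpow_le {h : ℝ → ℝ} {C α : ℝ} (hC : 0 < C)
    (hα : 0 < α) (hlow : ∀ t ∈ Ico (0 : ℝ) 1, C * (1 / (1 - t ^ α) - 1) ≤ h t) :
    Tendsto h (𝓝[<] 1) atTop := by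
  have hbound := (tendsto_atTop_add_const_right _ (-1)
    (tendsto_one_div_one_sub_rpow_nhdsLT_one hα)).const_mul_atTop hC
  simp only [← sub_eq_add_neg] at hbound
  exact tendsto_atTop_mono' _ (eventually_of_mem (Ico_mem_nhdsLT zero_lt_one) hlow) hbound

theorem bddAbove_image_add_comp_norm {E : Type*} [NormedAddCommGroup E] {G : E → ℝ}
    {φ : ℝ → ℝ} (hG : ContinuousOn G (closedBall 0 1)) (hφ : ConvexOn ℝ (Ico 0 1) φ)
    {K : Set E} (hK : IsCompact K) (hK1 : K ⊆ ball 0 1) :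
    BddAbove ((fun ξ ↦ G ξ + φ ‖ξ‖) '' K) := by
  obtain ⟨M₁, hM₁⟩ := hK.bddAbove_image (hG.mono (hK1.trans ball_subset_closedBall))
  obtain ⟨M₂, hM₂⟩ := hφ.bddAbove_image_of_isCompact (hK.image continuous_norm)
    (image_subset_iff.mpr fun ξ hξ ↦ ⟨norm_nonneg ξ, mem_ball_zero_iff.mp (hK1 hξ)⟩)
  refine ⟨M₁ + M₂, ?_⟩
  rintro _ ⟨ξ, hξ, rfl⟩
  exact add_le_add (hM₁ ⟨ξ, hξ, rfl⟩) (hM₂ ⟨‖ξ‖, ⟨ξ, hξ, rfl⟩, rfl⟩)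

section BallEnergy

variable {X E : Type*} [NormedAddCommGroup E] {a : X → ℝ} {F : E → ℝ}

noncomputable def ballEnergy (a : X → ℝ) (F : E → ℝ) (x : X) (ξ : E) : ℝ≥0∞ :=
  if ‖ξ‖ < 1 then ENNReal.ofReal (a x * F ξ) else ⊤

theorem ballEnergy_of_norm_lt_one {x : X} {ξ : E} (hξ : ‖ξ‖ < 1) :
    ballEnergy a F x ξ = ENNReal.ofReal (a x * F ξ) := if_pos hξ

theorem ballEnergy_of_one_le_norm {x : X} {ξ : E} (hξ : 1 ≤ ‖ξ‖) : ballEnergy a F x ξ = ⊤ :=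
  if_neg hξ.not_gt

theorem norm_lt_one_of_ballEnergy_ne_top {x : X} {ξ : E} (hξ : ballEnergy a F x ξ ≠ ⊤) :
    ‖ξ‖ < 1 :=
  not_le.mp fun h ↦ hξ (ballEnergy_of_one_le_norm h)

theorem ballEnergy_smul_le_add [NormedSpace ℝ E] {c' : ℝ} (hc' : 0 ≤ c') (ha : ∀ x, a x ∈ Icc 0 c')
    (hF : AlmostRadiallyDecreasing F (ball 0 1)) {ε : ℝ} (hε : 0 < ε) :
    ∃ η > 0, ∀ x ξ, ballEnergy a F x ξ ≠ ⊤ → ∀ t ∈ Ico (0 : ℝ) 1, 1 - t ≤ η →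
      ballEnergy a F x (t • ξ) ≤ ballEnergy a F x ξ + ENNReal.ofReal ε := by
  obtain ⟨η, hη, hFη⟩ := hF (ε / (c' + 1)) (by positivity)
  refine ⟨η, hη, fun x ξ hξ t ht htη ↦ ?_⟩
  have hξ1 := norm_lt_one_of_ballEnergy_ne_top hξ
  have htξ1 : ‖t • ξ‖ < 1 := by
    rw [norm_smul, Real.norm_of_nonneg ht.1]
    exact mul_lt_one_of_nonneg_of_lt_one_right ht.2.le (norm_nonneg ξ) hξ1
  rw [ballEnergy_of_norm_lt_one htξ1, ballEnergy_of_norm_lt_one hξ1]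
  refine (ENNReal.ofReal_le_ofReal ?_).trans ENNReal.ofReal_add_le
  have hFt := hFη ξ (mem_ball_zero_iff.mpr hξ1) t (Ico_subset_Icc_self ht) htη
  have hax : a x / (c' + 1) ≤ 1 := (div_le_one (by linarith)).mpr (by linarith [(ha x).2])
  calc a x * F (t • ξ) ≤ a x * (F ξ + ε / (c' + 1)) := mul_le_mul_of_nonneg_left hFt (ha x).1
    _ = a x * F ξ + a x / (c' + 1) * ε := by ring
    _ ≤ a x * F ξ + ε := by gcongr; exact mul_le_of_le_one_left hε.le hax

theorem iSup_ballEnergy_lt_top {c' : ℝ} (ha : ∀ x, a x ∈ Icc 0 c')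
    (hF : ∀ K ⊆ ball (0 : E) 1, IsCompact K → BddAbove (F '' K)) {K : Set E} (hK : IsCompact K)
    (hK1 : K ⊆ ball 0 1) : (⨆ x, ⨆ ξ ∈ K, ballEnergy a F x ξ) < ⊤ := by
  obtain ⟨M, hM⟩ := hF K hK1 hK
  refine lt_of_le_of_lt (iSup_le fun x ↦ iSup₂_le fun ξ hξ ↦ ?_)
    (ENNReal.ofReal_lt_top (r := c' * max M 0))
  rw [ballEnergy_of_norm_lt_one (mem_ball_zero_iff.mp (hK1 hξ))]
  refine ENNReal.ofReal_le_ofReal ?_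
  calc a x * F ξ ≤ a x * max M 0 :=
        mul_le_mul_of_nonneg_left ((hM ⟨ξ, hξ, rfl⟩).trans (le_max_left M 0)) (ha x).1
    _ ≤ c' * max M 0 := mul_le_mul_of_nonneg_right (ha x).2 (le_max_right M 0)

theorem exists_isCompact_forall_ofReal_le_ballEnergy [ProperSpace E] {c : ℝ} (hc : 0 < c)
    (ha : ∀ x, c ≤ a x) (hF : Tendsto F (comap norm (𝓝[<] 1)) atTop) {s : ℝ} (hs : 0 < s) :
    ∃ K, IsCompact K ∧ K ⊆ ball (0 : E) 1 ∧
      ∀ x ξ, ξ ∉ K → ENNReal.ofReal s ≤ ballEnergy a F x ξ := by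
  obtain ⟨r, hr1, hr⟩ : ∃ r < 1, ∀ ξ : E, ‖ξ‖ ∈ Ioo r 1 → s / c ≤ F ξ := by
    obtain ⟨U, hU, hUF⟩ := mem_comap.mp (hF.eventually_ge_atTop (s / c))
    obtain ⟨r, hr, hrU⟩ := mem_nhdsLT_iff_exists_Ioo_subset.mp hU
    exact ⟨r, hr, fun ξ hξ ↦ hUF (hrU hξ)⟩
  refine ⟨closedBall 0 r, isCompact_closedBall 0 r, closedBall_subset_ball hr1,
    fun x ξ hξK ↦ ?_⟩
  have hrξ : r < ‖ξ‖ := by simpa using hξK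
  rcases lt_or_ge ‖ξ‖ 1 with hξ1 | hξ1
  · rw [ballEnergy_of_norm_lt_one hξ1]
    refine ENNReal.ofReal_le_ofReal ?_
    calc s = c * (s / c) := (mul_div_cancel₀ s hc.ne').symm
      _ ≤ a x * F ξ := mul_le_mul (ha x) (hr ξ ⟨hrξ, hξ1⟩) (by positivity) (hc.le.trans (ha x))
  · rw [ballEnergy_of_one_le_norm hξ1]
    exact le_top

end BallEnergy

theorem stmt_14_general {d : ℕ} (g : Matrix (Fin d) (Fin d) ℝ → ℝ)
    (hgc : ContinuousOn g (Metric.closedBall (1 : Matrix (Fin d) (Fin d) ℝ) 1))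
    (hg0 : ∀ ξ ∈ Metric.closedBall (1 : Matrix (Fin d) (Fin d) ℝ) 1, 0 ≤ g ξ)
    (h : ℝ → ℝ) (hhconv : ConvexOn ℝ (Set.Ico (0 : ℝ) 1) h)
    (C α : ℝ) (hC : 0 < C) (hα : 0 < α)
    (hlow : ∀ t ∈ Set.Ico (0 : ℝ) 1, C * (1 / (1 - t ^ α) - 1) ≤ h t)
    (f : Matrix (Fin d) (Fin d) ℝ → ℝ≥0∞)
    (hf : ∀ ξ, f ξ = if ‖ξ - 1‖ < 1 then ENNReal.ofReal (g ξ + h ‖ξ - 1‖) else ⊤)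
    (A : (Fin d → ℝ) → ℝ) (c c' : ℝ) (hc : 0 < c)
    (hA : ∀ x, c ≤ A x ∧ A x ≤ c')
    (W₀ : (Fin d → ℝ) → Matrix (Fin d) (Fin d) ℝ → ℝ≥0∞)
    (hW₀ : ∀ x ξ, W₀ x ξ = ENNReal.ofReal (A x) * f (ξ + 1)) :
    -- (H1)
    (∀ ε : ℝ, 0 < ε → ∃ η : ℝ, 0 < η ∧ ∀ (x : Fin d → ℝ) (ξ : Matrix (Fin d) (Fin d) ℝ),
        W₀ x ξ ≠ ⊤ → ∀ t ∈ Set.Ico (0 : ℝ) 1, 1 - t ≤ η →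
          W₀ x (t • ξ) ≤ W₀ x ξ + ENNReal.ofReal ε) ∧
    -- (H2)
    (∀ K : Set (Matrix (Fin d) (Fin d) ℝ), IsCompact K →
        K ⊆ Metric.ball (0 : Matrix (Fin d) (Fin d) ℝ) 1 →
          (⨆ x : Fin d → ℝ, ⨆ ξ ∈ K, W₀ x ξ) < ⊤) ∧
    -- (H3)
    (∀ s : ℝ, 0 < s → ∃ K : Set (Matrix (Fin d) (Fin d) ℝ),
        IsCompact K ∧ K ⊆ Metric.ball (0 : Matrix (Fin d) (Fin d) ℝ) 1 ∧
        ∀ (x : Fin d → ℝ), ∀ ξ ∈ Metric.closedBall (0 : Matrix (Fin d) (Fin d) ℝ) 1,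
          ξ ∉ K → ENNReal.ofReal s ≤ W₀ x ξ) := by
  have hA' : ∀ x, A x ∈ Icc 0 c' := fun x ↦ ⟨hc.le.trans (hA x).1, (hA x).2⟩
  have hW : W₀ = ballEnergy A fun ξ ↦ g (ξ + 1) + h ‖ξ‖ := by
    funext x ξ
    rw [hW₀, hf, add_sub_cancel_right, ballEnergy]
    split_ifs
    · exact (ENNReal.ofReal_mul (hA' x).1).symm
    · exact ENNReal.mul_top (ENNReal.ofReal_pos.mpr (hc.trans_le (hA x).1)).ne'
  have hshift : MapsTo (· + 1) (closedBall 0 1) (closedBall (1 : Matrix (Fin d) (Fin d) ℝ) 1) :=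
    fun ξ hξ ↦ by simpa [dist_eq_norm] using hξ
  have hg : ContinuousOn (fun ξ ↦ g (ξ + 1)) (closedBall 0 1) :=
    hgc.comp (continuous_add_const 1).continuousOn hshift
  have hh0 : ∀ t ∈ Ico (0 : ℝ) 1, 0 ≤ h t := fun t ht ↦
    (mul_nonneg hC.le (sub_nonneg.mpr (one_le_one_div_one_sub_rpow ht hα))).trans (hlow t ht)
  subst hW
  refine ⟨fun ε hε ↦ ballEnergy_smul_le_add ((hA' 0).1.trans (hA' 0).2) hA' ?_ hε,
    fun K hK hK1 ↦ iSup_ballEnergy_lt_top hA'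
      (fun K hK1 hK ↦ bddAbove_image_add_comp_norm hg hhconv hK hK1) hK hK1, fun s hs ↦ ?_⟩
  · exact (hg.almostRadiallyDecreasing.mono ball_subset_closedBall).add
      ((hhconv.almostRadiallyDecreasing ⟨le_rfl, one_pos⟩ hh0).comp_norm.mono
        fun ξ hξ ↦ ⟨norm_nonneg ξ, mem_ball_zero_iff.mp hξ⟩)
  · have hg0' : ∀ᶠ ξ in comap norm (𝓝[<] 1), 0 ≤ g (ξ + 1) := by
      filter_upwards [preimage_mem_comap (self_mem_nhdsWithin : Iio (1 : ℝ) ∈ 𝓝[<] 1)] with ξ hξ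
      exact hg0 _ (hshift (mem_closedBall_zero_iff.mpr (le_of_lt hξ)))
    have hF := tendsto_atTop_add_left_of_le' _ 0 hg0'
      ((tendsto_atTop_of_one_div_one_sub_rpow_le hC hα hlow).comp tendsto_comap)
    obtain ⟨K, hK, hK1, hKs⟩ := exists_isCompact_forall_ofReal_le_ballEnergy hc
      (fun x ↦ (hA x).1) hF hs
    exact ⟨K, hK, hK1, fun x ξ _ ↦ hKs x ξ⟩

/-- The translated stored energy `W₀(x,ξ) = A(x) f(ξ + I)` satisfies
(H1), (H2) and (H3) with respect to the open unit ball `B(0,1)`. -/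
theorem stmt_14 {d : ℕ} (g : Matrix (Fin d) (Fin d) ℝ → ℝ)
    (hgc : ContinuousOn g (Metric.closedBall (1 : Matrix (Fin d) (Fin d) ℝ) 1))
    (hg0 : ∀ ξ ∈ Metric.closedBall (1 : Matrix (Fin d) (Fin d) ℝ) 1, 0 ≤ g ξ)
    (h : ℝ → ℝ) (hhconv : ConvexOn ℝ (Set.Ico (0 : ℝ) 1) h)
    (hhcont : ContinuousOn h (Set.Ico (0 : ℝ) 1))
    (hh0 : ∀ t ∈ Set.Ico (0 : ℝ) 1, 0 ≤ h t)
    (C α : ℝ) (hC : 0 < C) (hα : 0 < α)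
    (hlow : ∀ t ∈ Set.Ico (0 : ℝ) 1, C * (1 / (1 - t ^ α) - 1) ≤ h t)
    (f : Matrix (Fin d) (Fin d) ℝ → ℝ≥0∞)
    (hf : ∀ ξ, f ξ = if ‖ξ - 1‖ < 1 then ENNReal.ofReal (g ξ + h ‖ξ - 1‖) else ⊤)
    (A : (Fin d → ℝ) → ℝ) (c c' : ℝ) (hc : 0 < c) (hcc' : c ≤ c')
    (hA : ∀ x, c ≤ A x ∧ A x ≤ c')
    (hAper : ∀ (x : Fin d → ℝ) (z : Fin d → ℤ), A (x + fun i => (z i : ℝ)) = A x)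
    (W₀ : (Fin d → ℝ) → Matrix (Fin d) (Fin d) ℝ → ℝ≥0∞)
    (hW₀ : ∀ x ξ, W₀ x ξ = ENNReal.ofReal (A x) * f (ξ + 1)) :
    -- (H1)
    (∀ ε : ℝ, 0 < ε → ∃ η : ℝ, 0 < η ∧ ∀ (x : Fin d → ℝ) (ξ : Matrix (Fin d) (Fin d) ℝ),
        W₀ x ξ ≠ ⊤ → ∀ t ∈ Set.Ico (0 : ℝ) 1, 1 - t ≤ η →
          W₀ x (t • ξ) ≤ W₀ x ξ + ENNReal.ofReal ε) ∧
    -- (H2)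
    (∀ K : Set (Matrix (Fin d) (Fin d) ℝ), IsCompact K →
        K ⊆ Metric.ball (0 : Matrix (Fin d) (Fin d) ℝ) 1 →
          (⨆ x : Fin d → ℝ, ⨆ ξ ∈ K, W₀ x ξ) < ⊤) ∧
    -- (H3)
    (∀ s : ℝ, 0 < s → ∃ K : Set (Matrix (Fin d) (Fin d) ℝ),
        IsCompact K ∧ K ⊆ Metric.ball (0 : Matrix (Fin d) (Fin d) ℝ) 1 ∧
        ∀ (x : Fin d → ℝ), ∀ ξ ∈ Metric.closedBall (0 : Matrix (Fin d) (Fin d) ℝ) 1,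
          ξ ∉ K → ENNReal.ofReal s ≤ W₀ x ξ) :=
  stmt_14_general g hgc hg0 h hhconv C α hC hα hlow f hf A c c' hc hA W₀ hW₀
end

section
/- Let C be a bounded convex subset of M with nonempty interior and 0 ∈ int C, and let W : ℝ^d × M → [0,+∞] be Borel measurable with W(x,ξ) = +∞ whenever ξ ∉ cl(C). Let (t_n)_{n≥1} ⊂ [0,1) be a nondecreasing sequence such that for every integer n ≥ 1 and every x ∈ ℝ^d, W(x,ξ) ≥ n for all ξ ∈ cl(C) \ t_n·cl(C), and suppose that for each n there is β_n < +∞ with W(x,ξ) ≤ β_n for Lebesgue-a.e. x ∈ ℝ^d and every ξ ∈ t_n·cl(C). For each n define W_n : ℝ^d × M → [0,+∞) by W_n(x,ξ) = W(x,ξ) if ξ ∈ t_n·cl(C), and W_n(x,ξ) = n(1 + dist(ξ, cl(C))) otherwise. Then: (a) for every n ≥ 1, every x ∈ ℝ^d and every ξ ∈ M, W_n(x,ξ) ≤ W_{n+1}(x,ξ) ≤ W(x,ξ); (b) for every n ≥ 1 there exists α_n > 0 such that W_n(x,ξ) ≤ α_n(1 + ‖ξ‖) for Lebesgue-a.e.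 x ∈ ℝ^d and every ξ ∈ M. -/
open MeasureTheory
open scoped Pointwise ENNReal

-- The truncated integrands `W_n`.
open Classical in
noncomputable def Wtrunc {d : ℕ} {E : Type*} [NormedAddCommGroup E] [NormedSpace ℝ E]
    (W : (Fin d → ℝ) → E → ℝ≥0∞) (t : ℕ → ℝ) (C : Set E) (n : ℕ)
    (x : Fin d → ℝ) (ξ : E) : ℝ≥0∞ :=
  if ξ ∈ t n • closure C then W x ξ
  else ENNReal.ofReal ((n : ℝ) * (1 + Metric.infDist ξ (closure C)))

private lemma smul_mem_aux {E : Type*} [NormedAddCommGroup E] [NormedSpace ℝ E]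
    {S : Set E} (hS : Convex ℝ S) (h0 : (0 : E) ∈ S) {r : ℝ} (hr0 : 0 ≤ r) (hr1 : r ≤ 1)
    {c : E} (hc : c ∈ S) : r • c ∈ S := by
  have := hS h0 hc (by linarith : (0:ℝ) ≤ 1 - r) hr0 (by ring)
  simpa using this

private lemma smul_subset_aux {E : Type*} [NormedAddCommGroup E] [NormedSpace ℝ E]
    {S : Set E} (hS : Convex ℝ S) (h0 : (0 : E) ∈ S) {a b : ℝ} (ha : 0 ≤ a) (hab : a ≤ b) :
    a • S ⊆ b • S := by
  rcases eq_or_lt_of_le (ha.trans hab) with hb | hb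
  · have ha' : a = 0 := le_antisymm (hab.trans hb.symm.le) ha
    rw [ha', ← hb]
  · rintro _ ⟨c, hc, rfl⟩
    refine ⟨(a / b) • c, smul_mem_aux hS h0 (div_nonneg ha hb.le)
      ((div_le_one hb).2 hab) hc, ?_⟩
    show b • (a / b) • c = a • c
    rw [smul_smul, mul_div_cancel₀ _ hb.ne']

/-- The sequence `W_n` is nondecreasing, bounded by `W`, and each `W_n`
has linear growth. -/
theorem stmt_15 {d : ℕ} {E : Type*} [NormedAddCommGroup E] [NormedSpace ℝ E]
    [FiniteDimensional ℝ E] [MeasurableSpace E] [BorelSpace E]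
    {C : Set E} (hconv : Convex ℝ C) (hbdd : Bornology.IsBounded C)
    (hint : (interior C).Nonempty) (h0 : (0 : E) ∈ interior C)
    (W : (Fin d → ℝ) → E → ℝ≥0∞) (hWmeas : Measurable (Function.uncurry W))
    (hdom : ∀ x ξ, ξ ∉ closure C → W x ξ = ⊤)
    (t : ℕ → ℝ) (ht : Monotone t) (ht01 : ∀ n, t n ∈ Set.Ico (0 : ℝ) 1)
    (hlower : ∀ n : ℕ, 1 ≤ n → ∀ (x : Fin d → ℝ) (ξ : E),
      ξ ∈ closure C \ (t n • closure C) → (n : ℝ≥0∞) ≤ W x ξ)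
    (β : ℕ → ℝ)
    (hupper : ∀ n : ℕ, ∀ᵐ x : Fin d → ℝ, ∀ ξ ∈ t n • closure C,
      W x ξ ≤ ENNReal.ofReal (β n)) :
    (∀ n : ℕ, 1 ≤ n → ∀ (x : Fin d → ℝ) (ξ : E),
        Wtrunc W t C n x ξ ≤ Wtrunc W t C (n + 1) x ξ ∧
        Wtrunc W t C (n + 1) x ξ ≤ W x ξ) ∧
    (∀ n : ℕ, 1 ≤ n → ∃ α : ℝ, 0 < α ∧ ∀ᵐ x : Fin d → ℝ, ∀ ξ : E,
        Wtrunc W t C n x ξ ≤ ENNReal.ofReal (α * (1 + ‖ξ‖))) := by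
  have hclconv : Convex ℝ (closure C) := hconv.closure
  have h0cl : (0 : E) ∈ closure C := subset_closure (interior_subset h0)
  have hsub : ∀ n, t n • closure C ⊆ closure C := by
    intro n ξ hξ
    obtain ⟨c, hc, rfl⟩ := hξ
    exact smul_mem_aux hclconv h0cl (ht01 n).1 (ht01 n).2.le hc
  constructor
  · intro n hn x ξ
    by_cases h1 : ξ ∈ t n • closure C
    · have h2 : ξ ∈ t (n + 1) • closure C :=
        smul_subset_aux hclconv h0cl (ht01 n).1 (ht (Nat.le_succ n)) h1
      unfold Wtrunc
      rw [if_pos h1, if_pos h2]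
      exact ⟨le_rfl, le_rfl⟩
    · by_cases h2 : ξ ∈ t (n + 1) • closure C
      · have hξcl : ξ ∈ closure C := hsub _ h2
        have hdist : Metric.infDist ξ (closure C) = 0 :=
          Metric.infDist_zero_of_mem hξcl
        have hW : (n : ℝ≥0∞) ≤ W x ξ := hlower n hn x ξ ⟨hξcl, h1⟩
        unfold Wtrunc
        rw [if_neg h1, if_pos h2, hdist]
        constructor
        · calc ENNReal.ofReal ((n : ℝ) * (1 + 0)) = (n : ℝ≥0∞) := by
                rw [mul_add, mul_zero, mul_one, add_zero, ENNReal.ofReal_natCast]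
            _ ≤ W x ξ := hW
        · exact le_rfl
      · have hdnn : 0 ≤ Metric.infDist ξ (closure C) := Metric.infDist_nonneg
        unfold Wtrunc
        rw [if_neg h1, if_neg h2]
        constructor
        · apply ENNReal.ofReal_le_ofReal
          have : (n : ℝ) ≤ (n + 1 : ℕ) := by push_cast; linarith
          nlinarith
        · by_cases hξcl : ξ ∈ closure C
          · have hdist : Metric.infDist ξ (closure C) = 0 :=
              Metric.infDist_zero_of_mem hξcl
            have hW : ((n + 1 : ℕ) : ℝ≥0∞) ≤ W x ξ :=
              hlower (n + 1) (hn.trans (Nat.le_succ n)) x ξ ⟨hξcl, h2⟩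
            calc ENNReal.ofReal (((n + 1 : ℕ) : ℝ) * (1 + Metric.infDist ξ (closure C)))
                = ((n + 1 : ℕ) : ℝ≥0∞) := by
                  rw [hdist, add_zero, mul_one, ENNReal.ofReal_natCast]
              _ ≤ W x ξ := hW
          · rw [hdom x ξ hξcl]; exact le_top
  · intro n hn
    have hn1 : (1 : ℝ) ≤ n := by exact_mod_cast hn
    set α : ℝ := max (β n) n + 1 with hα
    have hαn : (n : ℝ) ≤ α := by
      have := le_max_right (β n) (n : ℝ); linarith
    have hβα : β n ≤ α := by
      have := le_max_left (β n) (n : ℝ); linarith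
    have hαpos : 0 < α := lt_of_lt_of_le (by linarith) hαn
    refine ⟨α, hαpos, ?_⟩
    filter_upwards [hupper n] with x hx
    intro ξ
    have hnorm : 0 ≤ ‖ξ‖ := norm_nonneg ξ
    unfold Wtrunc
    split_ifs with h
    · calc W x ξ ≤ ENNReal.ofReal (β n) := hx ξ h
        _ ≤ ENNReal.ofReal (α * (1 + ‖ξ‖)) := by
            apply ENNReal.ofReal_le_ofReal; nlinarith
    · apply ENNReal.ofReal_le_ofReal
      have hdle : Metric.infDist ξ (closure C) ≤ ‖ξ‖ := by
        have := Metric.infDist_le_dist_of_mem h0cl (x := ξ)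
        simpa [dist_zero_right] using this
      have hdnn : 0 ≤ Metric.infDist ξ (closure C) := Metric.infDist_nonneg
      nlinarith
end

section
/- Let f : ℝ^d × M → [0,+∞] be Borel measurable and Y-periodic in its first variable (Y = (0,1)^d). Then for every ξ ∈ M, Hf(ξ) = inf over integers s ≥ 1 of inf{ ∫_{(0,1)^d} f(sx, ξ + Dφ(x)) dx : φ : ℝ^d → ℝ^m Lipschitz with φ = 0 outside the open unit cube (0,1)^d }. -/
open MeasureTheory Filter
open scoped ENNReal Topology

/-!
The substitution `x ↦ n • x` maps `(0,1)^d` onto `(0,n)^d` with Jacobian `n^d`, and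
`φ ↦ n⁻¹ • φ (n • ·)` is a bijection from the Lipschitz functions vanishing outside `(0,n)^d`
onto those vanishing outside `(0,1)^d` which moves the derivative at `n • x` to `x`. Hence the
`n`-th term `n^(-d) * inf ∫_{(0,n)^d}` of the infimum defining `HF f ξ` is exactly the `s = n`
term of the right-hand side.
-/

open scoped Pointwise
open Module

section Rescale

variable {E F : Type*} [NormedAddCommGroup E] [NormedSpace ℝ E]
  [NormedAddCommGroup F] [NormedSpace ℝ F] {c : ℝ}

noncomputable def rescale (c : ℝ) (φ : E → F) : E → F := fun x => c⁻¹ • φ (c • x)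

lemma rescale_rescale_inv (hc : c ≠ 0) (φ : E → F) : rescale c (rescale c⁻¹ φ) = φ := by
  ext x
  simp [rescale, smul_smul, hc]

lemma rescale_inv_rescale (hc : c ≠ 0) (φ : E → F) : rescale c⁻¹ (rescale c φ) = φ := by
  simpa using rescale_rescale_inv (inv_ne_zero hc) φ

lemma rescale_surjective (hc : c ≠ 0) : Function.Surjective (rescale c : (E → F) → E → F) :=
  fun φ => ⟨_, rescale_rescale_inv hc φ⟩

lemma LipschitzWith.rescale {K : NNReal} {φ : E → F} (hφ : LipschitzWith K φ) (c : ℝ) :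
    LipschitzWith (‖c⁻¹‖₊ * (K * ‖c‖₊)) (rescale c φ) :=
  (lipschitzWith_smul c⁻¹).comp (hφ.comp (lipschitzWith_smul c))

lemma exists_lipschitzWith_rescale_iff (hc : c ≠ 0) {φ : E → F} :
    (∃ K, LipschitzWith K (rescale c φ)) ↔ ∃ K, LipschitzWith K φ :=
  ⟨fun ⟨_, hK⟩ => ⟨_, rescale_inv_rescale hc φ ▸ hK.rescale c⁻¹⟩,
    fun ⟨_, hK⟩ => ⟨_, hK.rescale c⟩⟩

lemma rescale_eq_zero_outside_iff (hc : c ≠ 0) {φ : E → F} (s : Set E) :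
    (∀ x ∉ s, rescale c φ x = 0) ↔ ∀ y ∉ c • s, φ y = 0 := by
  simp only [Set.mem_smul_set_iff_inv_smul_mem₀ hc]
  constructor
  · intro h y hy
    simpa [rescale, smul_smul, hc] using h _ hy
  · intro h x hx
    simp [rescale, h (c • x) (by simpa [smul_smul, hc] using hx)]

lemma fderiv_rescale (hc : c ≠ 0) (φ : E → F) (x : E) :
    fderiv ℝ (rescale c φ) x = fderiv ℝ φ (c • x) := by
  let L : E ≃L[ℝ] E := ContinuousLinearEquiv.smulLeft (Units.mk0 c hc)
  have : rescale c φ = c⁻¹ • (φ ∘ L) := rfl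
  rw [this, fderiv_const_smul_field, Pi.smul_apply, L.comp_right_fderiv]
  ext v
  simp [L, hc]

end Rescale

lemma setLIntegral_comp_smul {E : Type*} [NormedAddCommGroup E] [NormedSpace ℝ E]
    [MeasurableSpace E] [BorelSpace E] [FiniteDimensional ℝ E] (μ : Measure E)
    [μ.IsAddHaarMeasure] (f : E → ℝ≥0∞) {R : ℝ} (s : Set E) (hR : R ≠ 0) :
    ∫⁻ x in s, f (R • x) ∂μ = ENNReal.ofReal |(R ^ finrank ℝ E)⁻¹| * ∫⁻ x in R • s, f x ∂μ := by
  let e : E ≃ᵐ E := (Homeomorph.smul (Units.mk0 R hR)).toMeasurableEquiv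
  have hs : e ⁻¹' (R • s) = s := by
    ext x
    simp [e, Set.smul_mem_smul_set_iff₀ hR]
  calc ∫⁻ x in s, f (R • x) ∂μ
      = ∫⁻ x in e ⁻¹' (R • s), f (e x) ∂μ := by rw [hs]; rfl
    _ = ∫⁻ y in R • s, f y ∂(μ.map e) := by
      rw [e.restrict_map, lintegral_map_equiv]
    _ = ENNReal.ofReal |(R ^ finrank ℝ E)⁻¹| * ∫⁻ x in R • s, f x ∂μ := by
      rw [show ⇑e = (R • ·) from rfl, Measure.map_addHaar_smul μ hR, Measure.restrict_smul,
        lintegral_smul_measure, smul_eq_mul]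

lemma cube_eq_smul_cube_one (d : ℕ) {n : ℕ} (hn : 0 < n) : cube d n = (n : ℝ) • cube d 1 := by
  have hpi (k : ℕ) : cube d k = Set.univ.pi fun _ => Set.Ioo (0 : ℝ) k := by
    ext; simp [cube]
  rw [hpi, hpi, Set.smul_set_univ_pi]
  ext x
  simp [LinearOrderedField.smul_Ioo (Nat.cast_pos.2 hn)]

noncomputable def cellInf {d m : ℕ}
    (F : (Fin d → ℝ) → ((Fin d → ℝ) →L[ℝ] (Fin m → ℝ)) → ℝ≥0∞)
    (ξ : (Fin d → ℝ) →L[ℝ] (Fin m → ℝ)) (n : ℕ) : ℝ≥0∞ :=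
  ⨅ (φ : (Fin d → ℝ) → (Fin m → ℝ)) (_ : ∃ K, LipschitzWith K φ)
    (_ : ∀ x ∉ cube d n, φ x = 0), ∫⁻ x in cube d n, F x (ξ + fderiv ℝ φ x)

lemma cellInf_comp_smul {d m : ℕ}
    (F : (Fin d → ℝ) → ((Fin d → ℝ) →L[ℝ] (Fin m → ℝ)) → ℝ≥0∞)
    (ξ : (Fin d → ℝ) →L[ℝ] (Fin m → ℝ)) {n : ℕ} (hn : 0 < n) :
    cellInf (fun x => F ((n : ℝ) • x)) ξ 1 = 1 / (n : ℝ≥0∞) ^ d * cellInf F ξ n := by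
  have hc : (n : ℝ) ≠ 0 := by positivity
  have hscale : ENNReal.ofReal |((n : ℝ) ^ finrank ℝ (Fin d → ℝ))⁻¹| = 1 / (n : ℝ≥0∞) ^ d := by
    rw [finrank_fin_fun, abs_of_pos (by positivity), ENNReal.ofReal_inv_of_pos (by positivity),
      ENNReal.ofReal_pow (Nat.cast_nonneg n), ENNReal.ofReal_natCast, one_div]
  have hne0 : 1 / (n : ℝ≥0∞) ^ d ≠ 0 := by simp
  have hneTop : 1 / (n : ℝ≥0∞) ^ d ≠ ∞ := by simp [hn.ne']
  simp only [cellInf, ENNReal.mul_iInf_of_ne hne0 hneTop]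
  rw [← (rescale_surjective hc).iInf_comp]
  refine iInf_congr fun φ => iInf_congr_Prop (exists_lipschitzWith_rescale_iff hc) fun _ => ?_
  refine iInf_congr_Prop ?_ fun _ => ?_
  · rw [rescale_eq_zero_outside_iff hc, ← cube_eq_smul_cube_one d hn]
  · simp only [fderiv_rescale hc]
    rw [setLIntegral_comp_smul volume (fun y => F y (ξ + fderiv ℝ φ y)) _ hc, hscale,
      ← cube_eq_smul_cube_one d hn]

theorem stmt_19_general {d m : ℕ}
    (f : (Fin d → ℝ) → ((Fin d → ℝ) →L[ℝ] (Fin m → ℝ)) → ℝ≥0∞) :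
    ∀ ξ : (Fin d → ℝ) →L[ℝ] (Fin m → ℝ),
      HF f ξ =
        ⨅ (s : ℕ) (_ : 1 ≤ s) (φ : (Fin d → ℝ) → Fin m → ℝ) (_ : ∃ K, LipschitzWith K φ)
          (_ : ∀ x ∉ cube d 1, φ x = 0),
          ∫⁻ x in cube d 1, f ((s : ℝ) • x) (ξ + fderiv ℝ φ x) ∂volume := fun ξ =>
  iInf_congr fun _ => iInf_congr fun hn => (cellInf_comp_smul f ξ hn).symm

/-- Change-of-variables formula for the homogenized density:
`Hf(ξ) = inf_{s ≥ 1} inf { ∫_{(0,1)^d} f(sx, ξ + Dφ(x)) dx : φ Lipschitz, φ = 0 outside (0,1)^d }`. -/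
theorem stmt_19 {d m : ℕ} (hd : 0 < d)
    (f : (Fin d → ℝ) → ((Fin d → ℝ) →L[ℝ] (Fin m → ℝ)) → ℝ≥0∞)
    (hfmeas : Measurable (Function.uncurry f))
    (hfper : ∀ (x : Fin d → ℝ) (ξ : (Fin d → ℝ) →L[ℝ] (Fin m → ℝ)) (z : Fin d → ℤ),
      f (x + fun i => (z i : ℝ)) ξ = f x ξ) :
    ∀ ξ : (Fin d → ℝ) →L[ℝ] (Fin m → ℝ),
      HF f ξ =
        ⨅ (s : ℕ) (_ : 1 ≤ s) (φ : (Fin d → ℝ) → Fin m → ℝ) (_ : ∃ K, LipschitzWith K φ)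
          (_ : ∀ x ∉ cube d 1, φ x = 0),
          ∫⁻ x in cube d 1, f ((s : ℝ) • x) (ξ + fderiv ℝ φ x) ∂volume :=
  stmt_19_general f
end
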